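/- arXiv:2506.13572 — 5 statements merged into one kernel-verified Lean document; each statement's English description precedes it below -/
import Mathlib

section
/- Let P be a finite Γ-colored poset satisfying EC and ND, fix a linear extension x₁ < ... < x_p with colors a₁, ..., a_p, let m ≥ 1, and let I₁ ⊇ ... ⊇ I_m be an m-flag of order ideals with associated P-partition ψ bounded by m (so n_j = ψ(x_j)). Define the greedy operator X_a^min on a gravity-ordered m-tuple of ideals to add an element of color a to the lowest-indexed ideal where this is possible (and 0 if impossible). Then (X_{a_p}^min)^{n_p} ∘ ... ∘ (X_{a₁}^min)^{n₁} applied to the m-tuple (∅, ..., ∅) equals the m-tuple (I₁, ..., I_m); in particular it is nonzero. -/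
/-- `x` can be added to the ideal `I` with color `a`: equivalently, `x` is a minimal
element of the complementary filter with `κ x = a`. -/
def CanAdd {P Γ : Type} [PartialOrder P] [DecidableEq P] (κ : P → Γ) (a : Γ)
    (I : Finset P) (x : P) : Prop :=
  κ x = a ∧ x ∉ I ∧ IsLowerSet ((insert x I : Finset P) : Set P)

/-- The greedy operator `X_a^min`: add an element of color `a` to the lowest-indexed
ideal of the tuple where this is possible. -/
def GreedyStep {P Γ : Type} [PartialOrder P] [DecidableEq P] (κ : P → Γ) {m : ℕ}
    (a : Γ) (T T' : Fin m → Finset P) : Prop :=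
  ∃ (j : Fin m) (x : P), CanAdd κ a (T j) x ∧
    (∀ i : Fin m, i < j → ¬ ∃ y : P, CanAdd κ a (T i) y) ∧
    T' = Function.update T j (insert x (T j))

/-- The word `a_p^{ψ(x_p)}, …, a_1^{ψ(x_1)}` associated to an `m`-flag `I`, read in the
order in which the operators are applied (the group of `x_1` first). -/
def stackWord {P Γ : Type} [Fintype P] [DecidableEq P] (κ : P → Γ) {p : ℕ}
    (ℓ : P ≃ Fin p) {m : ℕ} (I : Fin m → Finset P) : List Γ :=
  (List.ofFn (fun j : Fin p =>
    List.replicate ((Finset.univ.filter (fun i : Fin m => ℓ.symm j ∈ I i)).card)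
      (κ (ℓ.symm j)))).flatten

section GPath

variable {P Γ : Type} [PartialOrder P] [DecidableEq P] {m : ℕ}

def GPath (κ : P → Γ) : List Γ → (Fin m → Finset P) → (Fin m → Finset P) → Prop
  | [], A, B => A = B
  | a :: w, A, B => ∃ C, GreedyStep κ a A C ∧ GPath κ w C B

lemma GPath.append {κ : P → Γ} : ∀ {w₁ w₂ : List Γ} {A B C : Fin m → Finset P},
    GPath κ w₁ A B → GPath κ w₂ B C → GPath κ (w₁ ++ w₂) A C
  | [], w₂, A, B, C, h1, h2 => by cases h1; exact h2
  | a :: w, w₂, A, B, C, h1, h2 => by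
      obtain ⟨D, hD, hP⟩ := h1
      exact ⟨D, hD, GPath.append hP h2⟩

lemma GPath.toFin {κ : P → Γ} : ∀ {w : List Γ} {A B : Fin m → Finset P},
    GPath κ w A B →
    ∃ T : Fin (w.length + 1) → (Fin m → Finset P),
      T 0 = A ∧
      (∀ k : Fin w.length, GreedyStep κ (w.get k) (T k.castSucc) (T k.succ)) ∧
      T (Fin.last _) = B
  | [], A, B, h => by
      cases h
      exact ⟨fun _ => A, rfl, fun k => absurd k.2 (by simp), rfl⟩
  | a :: w, A, B, h => by
      obtain ⟨C, hC, hP⟩ := h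
      obtain ⟨T', h0, hstep, hlast⟩ := GPath.toFin hP
      refine ⟨Fin.cases A T', by simp, ?_, ?_⟩
      · intro k
        induction k using Fin.cases with
        | zero =>
            show GreedyStep κ a (Fin.cases A T' (Fin.castSucc (0 : Fin (w.length + 1))))
              (Fin.cases A T' (Fin.succ (0 : Fin (w.length + 1))))
            rw [Fin.castSucc_zero, Fin.cases_zero, Fin.cases_succ, h0]
            exact hC
        | succ k =>
            show GreedyStep κ (w.get k) (Fin.cases A T' (Fin.succ k).castSucc)
              (Fin.cases A T' (Fin.succ k).succ)
            rw [← Fin.succ_castSucc, Fin.cases_succ, Fin.cases_succ]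
            exact hstep k
      · show Fin.cases A T' (Fin.succ (Fin.last w.length)) = B
        rw [Fin.cases_succ]
        exact hlast

lemma GPath.flatten {κ : P → Γ} : ∀ {p : ℕ} (f : Fin p → List Γ)
    (S : Fin (p + 1) → (Fin m → Finset P)),
    (∀ j : Fin p, GPath κ (f j) (S j.castSucc) (S j.succ)) →
    GPath κ (List.ofFn f).flatten (S 0) (S (Fin.last p))
  | 0, f, S, _ => by simpa [GPath] using rfl
  | p + 1, f, S, h => by
      rw [List.ofFn_succ, List.flatten_cons]
      refine GPath.append (by simpa using h 0) ?_
      have := GPath.flatten (fun j : Fin p => f j.succ) (fun q => S q.succ)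
        (fun j => by simpa only [← Fin.succ_castSucc] using h j.succ)
      simpa [Fin.succ_last] using this

end GPath

lemma mem_iff_lt_card_of_lower {m : ℕ} (s : Finset (Fin m))
    (hs : ∀ i j : Fin m, i ≤ j → j ∈ s → i ∈ s) (i : Fin m) :
    i ∈ s ↔ i.val < s.card := by
  constructor
  · intro hi
    have h1 : Finset.Iic i ⊆ s := fun j hj => hs j i (Finset.mem_Iic.mp hj) hi
    have := Finset.card_le_card h1
    rw [Fin.card_Iic] at this
    omega
  · intro hlt
    by_contra hi
    have h1 : s ⊆ Finset.Iio i := by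
      intro j hj
      rcases lt_or_ge j i with h | h
      · exact Finset.mem_Iio.mpr h
      · exact absurd (hs i j h hj) hi
    have := Finset.card_le_card h1
    rw [Fin.card_Iio] at this
    omega

lemma exists_covBy_le_of_lt' {P : Type} [PartialOrder P] [Fintype P] {a b : P} (h : a < b) :
    ∃ z, a ⋖ z ∧ z ≤ b := by
  classical
  letI : LocallyFiniteOrder P := Fintype.toLocallyFiniteOrder
  exact exists_covBy_le_of_lt h

/-- Intermediate state: ideal `i` contains elements of `I i` with label `< j`, plus the
element with label `j` if `i < k`. -/
def midState {P : Type} [PartialOrder P] [DecidableEq P] {p m : ℕ} (ℓ : P ≃ Fin p)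
    (I : Fin m → Finset P) (j k : ℕ) : Fin m → Finset P := fun i =>
  (I i).filter (fun x => (ℓ x).val < j ∨ ((ℓ x).val = j ∧ i.val < k))


/-- Lemma 4.3(b): for a finite `Γ`-colored poset satisfying EC and ND, a linear
extension, and an `m`-flag of order ideals `I₁ ⊇ ⋯ ⊇ I_m`, the composite of greedy
operators `(X_{a_p}^min)^{n_p} ∘ ⋯ ∘ (X_{a_1}^min)^{n_1}` applied to `(∅,…,∅)` is
defined (nonzero) and equals `(I₁,…,I_m)`. -/
theorem stmt11 (P Γ : Type) [Fintype P] [PartialOrder P] [DecidableEq P] [Nonempty P]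
    (κ : P → Γ) (hsurj : Function.Surjective κ)
    (hEC : ∀ x y : P, κ x = κ y → x ≤ y ∨ y ≤ x)
    (hND : ∀ x y : P, x ⋖ y → κ x ≠ κ y)
    (p : ℕ) (ℓ : P ≃ Fin p) (hℓ : ∀ x y : P, x ≤ y → ℓ x ≤ ℓ y)
    (m : ℕ) (hm : 1 ≤ m) (I : Fin m → Finset P)
    (hlow : ∀ j, IsLowerSet (↑(I j) : Set P)) (hanti : Antitone I) :
    ∃ T : Fin ((stackWord κ ℓ I).length + 1) → (Fin m → Finset P),
      T 0 = (fun _ => ∅) ∧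
      (∀ k : Fin (stackWord κ ℓ I).length,
        GreedyStep κ ((stackWord κ ℓ I).get k) (T k.castSucc) (T k.succ)) ∧
      T (Fin.last _) = I := by
  classical
  set n : Fin p → ℕ := fun j => (Finset.univ.filter (fun i : Fin m => ℓ.symm j ∈ I i)).card
    with hn
  -- the flag property
  have flag : ∀ (j : Fin p) (i : Fin m), ℓ.symm j ∈ I i ↔ i.val < n j := by
    intro j i
    have hs : ∀ i₁ i₂ : Fin m, i₁ ≤ i₂ →
        i₂ ∈ Finset.univ.filter (fun i => ℓ.symm j ∈ I i) →
        i₁ ∈ Finset.univ.filter (fun i => ℓ.symm j ∈ I i) := by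
      intro i₁ i₂ h12 h2
      simp only [Finset.mem_filter, Finset.mem_univ, true_and] at h2 ⊢
      exact hanti h12 h2
    have := mem_iff_lt_card_of_lower _ hs i
    simpa using this
  have hnm : ∀ j, n j ≤ m := by
    intro j
    have := Finset.card_filter_le Finset.univ (fun i : Fin m => ℓ.symm j ∈ I i)
    simpa using this
  have hstrict : ∀ x y : P, x < y → (ℓ x).val < (ℓ y).val := by
    intro x y h
    have h1 := hℓ x y h.le
    have h2 : ℓ x ≠ ℓ y := fun e => h.ne (ℓ.injective e)
    exact Fin.lt_def.mp (lt_of_le_of_ne h1 h2)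
  -- the single greedy step
  have step : ∀ (j : Fin p) (k : ℕ), k < n j →
      GreedyStep κ (κ (ℓ.symm j)) (midState ℓ I j.val k) (midState ℓ I j.val (k+1)) := by
    intro j k hk
    have hkm : k < m := lt_of_lt_of_le hk (hnm j)
    obtain ⟨x, hxdef⟩ : ∃ x : P, x = ℓ.symm j := ⟨_, rfl⟩
    have hℓx : ℓ x = j := by rw [hxdef]; exact ℓ.apply_symm_apply j
    have hxI : ∀ i : Fin m, i.val < n j → x ∈ I i := fun i hi => by
      rw [hxdef]; exact (flag j i).mpr hi
    have hxuniq : ∀ z : P, (ℓ z).val = j.val → z = x := by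
      intro z hz
      have hzj : ℓ z = j := Fin.ext hz
      rw [hxdef, ← hzj, Equiv.symm_apply_apply]
    refine ⟨⟨k, hkm⟩, x, ⟨by rw [hxdef], ?_, ?_⟩, ?_, ?_⟩
    · -- x not yet in ideal k
      intro hmem
      rw [midState, Finset.mem_filter] at hmem
      rcases hmem.2 with h | h
      · rw [hℓx] at h; omega
      · exact absurd h.2 (lt_irrefl k)
    · -- insert x is a lower set
      intro z y hyz hz
      simp only [Finset.coe_insert, Set.mem_insert_iff, Finset.mem_coe, midState,
        Finset.mem_filter] at hz ⊢
      rcases hz with hzx | ⟨hzI, hzc⟩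
      · by_cases hyx : y = x
        · exact Or.inl hyx
        · have hylt : y < x := lt_of_le_of_ne (hzx ▸ hyz) hyx
          refine Or.inr ⟨hlow _ hylt.le (hxI ⟨k, hkm⟩ hk), Or.inl ?_⟩
          have h5 := hstrict y x hylt
          rw [hℓx] at h5
          exact h5
      · refine Or.inr ⟨hlow _ hyz hzI, Or.inl ?_⟩
        have hzlt : (ℓ z).val < j.val := by
          rcases hzc with h | h
          · exact h
          · exact absurd h.2 (by omega)
        have := hℓ y z hyz
        have : (ℓ y).val ≤ (ℓ z).val := this
        omega
    · -- greedy minimality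
      rintro i hi ⟨y, hcol, hnotmem, hls⟩
      have hik : i.val < k := hi
      have hxmem : x ∈ midState ℓ I j.val k i := by
        rw [midState, Finset.mem_filter]
        exact ⟨hxI i (by omega), Or.inr ⟨by rw [hℓx], hik⟩⟩
      have hyx : κ y = κ x := by rw [hxdef]; exact hcol
      rcases hEC y x hyx with h | h
      · -- y ≤ x : then y should already be in the ideal
        have hyne : y ≠ x := by rintro rfl; exact hnotmem hxmem
        have hylt : y < x := lt_of_le_of_ne h hyne
        apply hnotmem
        rw [midState, Finset.mem_filter]
        refine ⟨hlow i h (hxI i (by omega)), Or.inl ?_⟩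
        have := hstrict y x hylt
        rw [hℓx] at this
        exact this
      · -- x ≤ y : covering element gives a contradiction
        have hxne : x ≠ y := by rintro rfl; exact hnotmem hxmem
        have hxlt : x < y := lt_of_le_of_ne h hxne
        obtain ⟨z, hcov, hzy⟩ := exists_covBy_le_of_lt' hxlt
        have hzcol : κ x ≠ κ z := hND x z hcov
        have hzney : z ≠ y := fun e => hzcol (by rw [e, hyx])
        have hymem : y ∈ ((insert y (midState ℓ I j.val k i) : Finset P) : Set P) := by
          simp
        have hzmem := hls hzy hymem
        simp only [Finset.coe_insert, Set.mem_insert_iff, Finset.mem_coe] at hzmem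
        rcases hzmem with e | hzmem
        · exact hzney e
        · rw [midState, Finset.mem_filter] at hzmem
          have hjz : j.val < (ℓ z).val := by
            have := hstrict x z hcov.lt
            rw [hℓx] at this
            exact this
          rcases hzmem.2 with h' | h' <;> omega
    · -- the resulting tuple
      funext i
      by_cases hie : i = ⟨k, hkm⟩
      · subst hie
        rw [Function.update_self]
        ext z
        simp only [midState, Finset.mem_insert, Finset.mem_filter]
        constructor
        · rintro ⟨hzI, hzc⟩
          rcases hzc with h | h
          · exact Or.inr ⟨hzI, Or.inl h⟩
          · exact Or.inl (hxuniq z h.1)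
        · rintro (rfl | ⟨hzI, hzc⟩)
          · exact ⟨hxI _ hk, Or.inr ⟨by rw [hℓx], Nat.lt_succ_self k⟩⟩
          · refine ⟨hzI, ?_⟩
            rcases hzc with h | h
            · exact Or.inl h
            · exact Or.inr ⟨h.1, Nat.lt_succ_of_lt h.2⟩
      · rw [Function.update_of_ne hie]
        ext z
        have hiv : i.val ≠ k := fun e => hie (Fin.ext e)
        simp only [midState, Finset.mem_filter]
        constructor <;> rintro ⟨h1, h2⟩ <;> exact ⟨h1, by omega⟩
  -- the group path for one element of the linear extension
  have group : ∀ j : Fin p, GPath κ (List.replicate (n j) (κ (ℓ.symm j)))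
      (midState ℓ I j.val 0) (midState ℓ I j.val (n j)) := by
    intro j
    have aux : ∀ k, k ≤ n j → GPath κ (List.replicate k (κ (ℓ.symm j)))
        (midState ℓ I j.val 0) (midState ℓ I j.val k) := by
      intro k
      induction k with
      | zero => intro _; exact rfl
      | succ k ih =>
          intro hk1
          rw [List.replicate_succ']
          refine GPath.append (ih (by omega)) ?_
          exact ⟨midState ℓ I j.val (k+1), step j k (by omega), rfl⟩
    exact aux (n j) le_rfl
  -- endpoints match up
  have hS : ∀ j : Fin p, midState ℓ I j.val (n j) = midState ℓ I (j.val + 1) 0 := by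
    intro j
    funext i
    ext z
    simp only [midState, Finset.mem_filter]
    constructor
    · rintro ⟨hzI, hzc⟩
      refine ⟨hzI, Or.inl ?_⟩
      rcases hzc with h | h
      · omega
      · omega
    · rintro ⟨hzI, hzc⟩
      rcases hzc with h | h
      · refine ⟨hzI, ?_⟩
        by_cases hc : (ℓ z).val < j.val
        · exact Or.inl hc
        · have hz : (ℓ z).val = j.val := by omega
          have : z = ℓ.symm j := by
            have : ℓ z = j := Fin.ext hz
            rw [← this, Equiv.symm_apply_apply]
          refine Or.inr ⟨hz, ?_⟩
          rw [← (flag j i)]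
          rw [← this]
          exact hzI
      · exact absurd h.2 (by omega)
  -- assemble via GPath.flatten
  set S : Fin (p + 1) → (Fin m → Finset P) := fun q => midState ℓ I q.val 0 with hSdef
  have hpath : GPath κ (stackWord κ ℓ I) (S 0) (S (Fin.last p)) := by
    rw [stackWord]
    refine GPath.flatten (fun j : Fin p =>
      List.replicate ((Finset.univ.filter (fun i : Fin m => ℓ.symm j ∈ I i)).card)
        (κ (ℓ.symm j))) S ?_
    intro j
    have h1 : S j.castSucc = midState ℓ I j.val 0 := rfl
    have h2 : S j.succ = midState ℓ I (j.val + 1) 0 := rfl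
    rw [h1, h2, ← hS j]
    exact group j
  have hS0 : S 0 = (fun _ => ∅) := by
    funext i
    simp [hSdef, midState]
  have hSlast : S (Fin.last p) = I := by
    funext i
    simp only [hSdef, midState, Fin.val_last]
    rw [Finset.filter_true_of_mem]
    intro z _
    exact Or.inl (ℓ z).isLt
  rw [hS0, hSlast] at hpath
  exact GPath.toFin hpath
end

section
/- Let P be a finite Γ-colored poset satisfying EC and ND, fix m ≥ 1 and a linear extension of P. For each m-flag of order ideals, the associated m-stackwise vector, when expanded in the basis of m-multisets of ideals, has as its unique gravity-minimal (leading) term the m-multiset {I₁, ..., I_m} formed by the flag itself. Consequently, distinct m-flags yield m-stackwise vectors with distinct leading terms, and the collection of all m-stackwise vectors (over all m-flags) is linearly independent. -/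
/-!
Every operator `X_a` has nonnegative coefficients, so nothing cancels and it suffices to follow the
support of the stackwise vector as the colour groups are applied along the linear extension. If `φ`
is the partial profile built so far, every multiset `M` in the support has `m` ideals, total size
`∑ φ`, and is dominated by `φ`: for each `x`, the number of incidences `z ∈ J ∈ M` with `z` above
`x` and of the colour of `x` is at most the corresponding sum of `φ`; meanwhile the flag of `φ`
keeps a positive coefficient. Applying `X_{κ x₀}` preserves this, because EC and ND force the added
element to lie below `x₀`. For antitone `φ`, the flag of `φ` is the gravity-least multiset of `m`
ideals dominated by `φ`: its largest ideal `{φ > 0}` contains every ideal of such a multiset, so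
either it occurs and can be peeled off, or the flag is already smaller at the first key. Linear
independence then follows by triangularity.
-/

open scoped Classical

/-- The set of ideals obtainable from the ideal `I` by adding a minimal element of the
complementary filter of color `a`. -/
noncomputable def addSet {P Γ : Type} [Fintype P] [PartialOrder P] [DecidableEq P]
    (κ : P → Γ) (a : Γ) (I : Finset P) : Finset (Finset P) :=
  (Finset.univ.filter (fun x : P => κ x = a ∧ x ∉ I ∧
    IsLowerSet ((insert x I : Finset P) : Set P))).image (fun x => insert x I)

/-- The raising operator `X_a` on a single `m`-multiset of ideals: replace one
occurrence of an ideal `I` of the multiset by `X_a·I`, summed over all positions. -/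
noncomputable def XaM {P Γ : Type} [Fintype P] [PartialOrder P] [DecidableEq P]
    (κ : P → Γ) (a : Γ) (M : Multiset (Finset P)) : Multiset (Finset P) →₀ ℚ :=
  (M.map (fun I =>
    ((addSet κ a I).val.map (fun J => Finsupp.single (M.erase I + {J}) (1 : ℚ))).sum)).sum

/-- The linear extension of `X_a` to formal `ℚ`-linear combinations of multisets. -/
noncomputable def Xv {P Γ : Type} [Fintype P] [PartialOrder P] [DecidableEq P]
    (κ : P → Γ) (a : Γ) (v : Multiset (Finset P) →₀ ℚ) : Multiset (Finset P) →₀ ℚ :=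
  v.sum (fun M c => c • XaM κ a M)

/-- The divided power operator `⟨a^k⟩ = X_a^k / k!`. -/
noncomputable def opPow {P Γ : Type} [Fintype P] [PartialOrder P] [DecidableEq P]
    (κ : P → Γ) (a : Γ) (k : ℕ) (v : Multiset (Finset P) →₀ ℚ) : Multiset (Finset P) →₀ ℚ :=
  ((k.factorial : ℚ)⁻¹) • (Xv κ a)^[k] v

/-- The `m`-stackwise vector `⟨a_p^{ψ(x_p)}, …, a_1^{ψ(x_1)}⟩·{∅,…,∅}` of the
`m`-flag `I`, where `ψ(x) = #{i : x ∈ I_i}` and the operators are composed right to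
left starting with the color group of `x₁`. -/
noncomputable def stackVec {P Γ : Type} [Fintype P] [PartialOrder P] [DecidableEq P]
    (κ : P → Γ) {p : ℕ} (ℓ : P ≃ Fin p) (m : ℕ) (I : Fin m → Finset P) :
    Multiset (Finset P) →₀ ℚ :=
  (List.ofFn (fun j : Fin p =>
    (κ (ℓ.symm j), (Finset.univ.filter (fun i : Fin m => ℓ.symm j ∈ I i)).card))).foldl
    (fun v pr => opPow κ pr.1 pr.2 v) (Finsupp.single (Multiset.replicate m (∅ : Finset P)) 1)

/-- The `m`-multiset of ideals underlying the `m`-flag `I`. -/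
def flagMultiset {P : Type} {m : ℕ} (I : Fin m → Finset P) : Multiset (Finset P) :=
  ↑(List.ofFn I)

/-- The gravity-order key of an ideal: ideals with more elements are smaller, ties
broken lexicographically on the sorted list of positions in the linear extension. -/
noncomputable def idealKey {P : Type} [DecidableEq P] {p : ℕ} (ℓ : P ≃ Fin p)
    (I : Finset P) : ℕ ×ₗ List (Fin p) :=
  toLex (p - I.card, Finset.sort (I.image ℓ) (· ≤ ·))

/-- The gravity order on `m`-multisets of ideals: compare total cardinality first
(larger total is smaller), then lexicographically on the gravity-sorted lists of
ideals (via their gravity keys). -/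
noncomputable def gravityM {P : Type} [DecidableEq P] {p : ℕ} (ℓ : P ≃ Fin p)
    (M N : Multiset (Finset P)) : Prop :=
  (N.map Finset.card).sum < (M.map Finset.card).sum ∨
  ((M.map Finset.card).sum = (N.map Finset.card).sum ∧
    List.Lex (· < ·) ((M.map (idealKey ℓ)).sort (· ≤ ·)) ((N.map (idealKey ℓ)).sort (· ≤ ·)))

open Finset

theorem linearIndependent_of_leading {ι α β R : Type*} [Ring R] [NoZeroDivisors R]
    [LinearOrder β] (f : ι → α →₀ R) (lead : ι → α) (key : α → β)
    (hinj : Function.Injective lead) (hlead : ∀ i, f i (lead i) ≠ 0)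
    (hmin : ∀ i, ∀ a ∈ (f i).support, a ≠ lead i → key (lead i) < key a) :
    LinearIndependent R f := by
  rw [linearIndependent_iff]
  intro l hl
  by_contra hl0
  obtain ⟨i₀, hi₀, hmin₀⟩ :=
    l.support.exists_min_image (key ∘ lead) (Finsupp.support_nonempty_iff.mpr hl0)
  have hvanish : ∀ i ∈ l.support, i ≠ i₀ → f i (lead i₀) = 0 := fun i hi hne => by
    by_contra h
    exact (hmin₀ i hi).not_gt
      (hmin i _ (Finsupp.mem_support_iff.mpr h) fun h' => hne (hinj h').symm)
  have hcoeff : l i₀ * f i₀ (lead i₀) = 0 := by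
    rw [← Finset.sum_eq_single_of_mem (f := fun i => l i * f i (lead i₀)) i₀ hi₀
      fun i hi hne => by rw [hvanish i hi hne, mul_zero]]
    simpa [Finsupp.linearCombination_apply, Finsupp.sum_apply, Finsupp.sum] using
      congrArg (· (lead i₀)) hl
  exact Finsupp.mem_support_iff.mp hi₀ ((mul_eq_zero.mp hcoeff).resolve_right (hlead i₀))

lemma map_univ_val_eq_erase_add {ι α : Type*} [Fintype ι] [DecidableEq ι] [DecidableEq α]
    {f g : ι → α} (t : ι) (h : ∀ i ≠ t, g i = f i) :
    univ.val.map g = (univ.val.map f).erase (f t) + {g t} := by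
  have hsplit : (univ : Finset ι).val = t ::ₘ univ.val.erase t :=
    (Multiset.cons_erase (mem_univ t)).symm
  have hrest : (univ.val.erase t).map g = (univ.val.erase t).map f :=
    Multiset.map_congr rfl fun i hi => h i ((univ.nodup.mem_erase_iff.mp hi).1)
  rw [hsplit, Multiset.map_cons, Multiset.map_cons, Multiset.erase_cons_head, hrest,
    add_comm, Multiset.singleton_add]

section Operators

variable {P Γ : Type} [Fintype P] [PartialOrder P] [DecidableEq P] (κ : P → Γ) (a : Γ)

lemma XaM_nonneg (M : Multiset (Finset P)) : 0 ≤ XaM κ a M :=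
  Multiset.sum_nonneg fun _ hf => by
    obtain ⟨I, -, rfl⟩ := Multiset.mem_map.mp hf
    exact Multiset.sum_nonneg fun _ hg => by
      obtain ⟨J, -, rfl⟩ := Multiset.mem_map.mp hg
      exact Finsupp.single_nonneg.mpr zero_le_one

lemma single_le_XaM {M : Multiset (Finset P)} {J : Finset P} (hJ : J ∈ M) {y : P}
    (hy : κ y = a) (hyJ : y ∉ J) (hlower : IsLowerSet (↑(insert y J) : Set P)) :
    Finsupp.single (M.erase J + {insert y J}) 1 ≤ XaM κ a M := by
  have hadd : insert y J ∈ (addSet κ a J).val :=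
    mem_image.mpr ⟨y, mem_filter.mpr ⟨mem_univ _, hy, hyJ, hlower⟩, rfl⟩
  have hterms (I : Finset P) : ∀ f ∈ (addSet κ a I).val.map
      (fun K => Finsupp.single (M.erase I + {K}) (1 : ℚ)), 0 ≤ f := fun _ hf => by
    obtain ⟨K, -, rfl⟩ := Multiset.mem_map.mp hf
    exact Finsupp.single_nonneg.mpr zero_le_one
  refine (Multiset.single_le_sum (hterms J) _ (Multiset.mem_map_of_mem _ hadd)).trans
    (Multiset.single_le_sum (fun _ hf => ?_) _ (Multiset.mem_map_of_mem _ hJ))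
  obtain ⟨I, -, rfl⟩ := Multiset.mem_map.mp hf
  exact Multiset.sum_nonneg (hterms I)

lemma XaM_mem_supported (M : Multiset (Finset P)) :
    XaM κ a M ∈ Finsupp.supported ℚ ℚ {N | ∃ J ∈ M, ∃ y, κ y = a ∧ y ∉ J ∧
      IsLowerSet (↑(insert y J) : Set P) ∧ N = M.erase J + {insert y J}} :=
  multiset_sum_mem _ fun _ hf => by
    obtain ⟨J, hJ, rfl⟩ := Multiset.mem_map.mp hf
    refine multiset_sum_mem _ fun _ hg => ?_
    obtain ⟨K, hK, rfl⟩ := Multiset.mem_map.mp hg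
    obtain ⟨y, hy, rfl⟩ := mem_image.mp hK
    obtain ⟨-, hya, hyJ, hlower⟩ := mem_filter.mp hy
    exact Finsupp.single_mem_supported ℚ _ ⟨J, hJ, y, hya, hyJ, hlower, rfl⟩

variable {κ a} {v : Multiset (Finset P) →₀ ℚ}

lemma Xv_nonneg (hv : 0 ≤ v) : 0 ≤ Xv κ a v :=
  Finset.sum_nonneg fun M _ => smul_nonneg (hv M) (XaM_nonneg κ a M)

lemma smul_XaM_le_Xv (hv : 0 ≤ v) (M : Multiset (Finset P)) :
    v M • XaM κ a M ≤ Xv κ a v := by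
  by_cases hM : M ∈ v.support
  · exact Finset.single_le_sum (f := fun M => v M • XaM κ a M)
      (fun M _ => smul_nonneg (hv M) (XaM_nonneg κ a M)) hM
  · rw [Finsupp.notMem_support_iff.mp hM, zero_smul]
    exact Xv_nonneg hv

lemma Xv_mem_supported {s : Set (Multiset (Finset P))}
    (h : ∀ M, v M ≠ 0 → XaM κ a M ∈ Finsupp.supported ℚ ℚ s) :
    Xv κ a v ∈ Finsupp.supported ℚ ℚ s :=
  Submodule.finsuppSum_mem _ _ _ _ fun M hM => Submodule.smul_mem _ _ (h M hM)

end Operators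

section Profiles

variable {P : Type} [DecidableEq P]

def profile (M : Multiset (Finset P)) (z : P) : ℕ := M.countP (z ∈ ·)

lemma profile_add (M N : Multiset (Finset P)) : profile (M + N) = profile M + profile N :=
  funext fun _ => Multiset.countP_add _ M N

lemma profile_singleton (J : Finset P) (z : P) : profile {J} z = if z ∈ J then 1 else 0 := by
  rw [profile, ← Multiset.cons_zero, Multiset.countP_cons, Multiset.countP_zero, zero_add]

lemma profile_pos {M : Multiset (Finset P)} {J : Finset P} (hJ : J ∈ M) {z : P} (hz : z ∈ J) :
    0 < profile M z :=
  Multiset.countP_pos.mpr ⟨J, hJ, hz⟩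

lemma profile_insert {y : P} {J : Finset P} (hy : y ∉ J) :
    profile {insert y J} = profile {J} + Pi.single y 1 := by
  funext z
  by_cases hz : z = y
  · subst hz
    simp [profile_singleton, hy]
  · simp [profile_singleton, hz]

end Profiles

section Domination

variable {P Γ : Type} [Fintype P] [PartialOrder P]

noncomputable def sameColorAbove (κ : P → Γ) (x : P) : Finset P :=
  univ.filter fun z => κ z = κ x ∧ x ≤ z

def IsDominated (κ : P → Γ) (f g : P → ℕ) : Prop :=
  ∀ x, ∑ z ∈ sameColorAbove κ x, f z ≤ ∑ z ∈ sameColorAbove κ x, g z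

variable {κ : P → Γ} {f g f' g' : P → ℕ}

lemma IsDominated.add (h : IsDominated κ f g) (h' : IsDominated κ f' g') :
    IsDominated κ (f + f') (g + g') := fun x => by
  simpa only [Pi.add_apply, sum_add_distrib] using add_le_add (h x) (h' x)

lemma IsDominated.of_add_left {h : P → ℕ} (hd : IsDominated κ (h + f) (h + g)) :
    IsDominated κ f g := fun x => by
  simpa only [Pi.add_apply, sum_add_distrib, add_le_add_iff_left] using hd x

lemma isDominated_single [DecidableEq P] {y x₀ : P} (hy : κ y = κ x₀) (hyx : y ≤ x₀) :
    IsDominated κ (Pi.single y 1) (Pi.single x₀ 1) := fun x => by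
  have hmem : y ∈ sameColorAbove κ x → x₀ ∈ sameColorAbove κ x := by
    simp only [sameColorAbove, mem_filter, mem_univ, true_and, hy]
    exact fun h => ⟨h.1, h.2.trans hyx⟩
  rw [sum_pi_single', sum_pi_single']
  by_cases hyS : y ∈ sameColorAbove κ x
  · simp [hyS, hmem hyS]
  · simp [hyS]

lemma IsDominated.exists_pos (h : IsDominated κ f g) {x : P} (hx : 0 < f x) :
    ∃ w, κ w = κ x ∧ x ≤ w ∧ 0 < g w := by
  have hself : x ∈ sameColorAbove κ x := by simp [sameColorAbove]
  have hsum : 0 < ∑ z ∈ sameColorAbove κ x, g z :=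
    (hx.trans_le (single_le_sum (fun _ _ => Nat.zero_le _) hself)).trans_le (h x)
  obtain ⟨w, hw, hpos⟩ := sum_pos_iff.mp hsum
  simp only [sameColorAbove, mem_filter, mem_univ, true_and] at hw
  exact ⟨w, hw.1, hw.2, hpos⟩

end Domination

section Flags

variable {P : Type} [Fintype P]

noncomputable def superlevel (φ : P → ℕ) (i : ℕ) : Finset P := univ.filter fun x => i < φ x

noncomputable def flagOf (φ : P → ℕ) (m : ℕ) : Multiset (Finset P) :=
  flagMultiset fun i : Fin m => superlevel φ i

lemma mem_superlevel {φ : P → ℕ} {i : ℕ} {x : P} : x ∈ superlevel φ i ↔ i < φ x := by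
  simp [superlevel]

lemma superlevel_subset_superlevel {φ ψ : P → ℕ} {i j : ℕ} (h : ∀ x, j < ψ x → i < φ x) :
    superlevel ψ j ⊆ superlevel φ i := fun _ hx => mem_superlevel.mpr (h _ (mem_superlevel.mp hx))

lemma flagOf_succ (φ : P → ℕ) (m : ℕ) :
    flagOf φ (m + 1) = superlevel φ 0 ::ₘ flagOf (fun x => φ x - 1) m := by
  have hlevel (i : Fin m) : superlevel φ (i.succ : ℕ) = superlevel (fun x => φ x - 1) i := by
    ext x
    simp only [mem_superlevel, Fin.val_succ]
    omega
  simp only [flagOf, flagMultiset, List.ofFn_succ, hlevel, Fin.val_zero, ← Multiset.cons_coe]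

lemma exists_eq_superlevel_of_mem_flagOf {φ : P → ℕ} {m : ℕ} {J : Finset P}
    (hJ : J ∈ flagOf φ m) : ∃ i < m, J = superlevel φ i := by
  obtain ⟨i, rfl⟩ := List.mem_ofFn.mp (Multiset.mem_coe.mp hJ)
  exact ⟨i, i.isLt, rfl⟩

lemma isLowerSet_insert_superlevel [PartialOrder P] [DecidableEq P] {φ : P → ℕ}
    (hφ : Antitone φ) {x₀ : P} {t : ℕ} (hbelow : ∀ z < x₀, t < φ z) :
    IsLowerSet (↑(insert x₀ (superlevel φ t)) : Set P) := by
  intro a b hba ha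
  simp only [coe_insert, Set.mem_insert_iff, mem_coe, mem_superlevel] at ha ⊢
  rcases ha with rfl | ha
  · exact hba.eq_or_lt.imp id (hbelow b)
  · exact Or.inr (ha.trans_le (hφ hba))

lemma flagOf_add_single [DecidableEq P] {φ : P → ℕ} {x₀ : P} {m : ℕ} (htm : φ x₀ < m) :
    flagOf (φ + Pi.single x₀ 1) m =
      (flagOf φ m).erase (superlevel φ (φ x₀)) + {insert x₀ (superlevel φ (φ x₀))} := by
  have hlevel (i : ℕ) : superlevel (φ + Pi.single x₀ 1) i =
      if i = φ x₀ then insert x₀ (superlevel φ (φ x₀)) else superlevel φ i := by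
    ext x
    by_cases hx : x = x₀
    · subst hx
      split_ifs with hi
      · simp [mem_superlevel, hi]
      · simp only [mem_superlevel, Pi.add_apply, Pi.single_eq_same]
        omega
    · split_ifs with hi <;> simp [mem_superlevel, hx, hi]
  have key := map_univ_val_eq_erase_add (f := fun i : Fin m => superlevel φ i)
    (g := fun i : Fin m => superlevel (φ + Pi.single x₀ 1) i) ⟨φ x₀, htm⟩
    fun i hi => by rw [hlevel, if_neg (fun h => hi (Fin.ext h))]
  rw [Fin.univ_val_map, Fin.univ_val_map, hlevel, if_pos rfl] at key
  exact key

end Flags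

section FlagMultiset

variable {P : Type} {m : ℕ}

lemma flagMultiset_injective {I I' : Fin m → Finset P} (hI : Antitone I) (hI' : Antitone I')
    (h : flagMultiset I = flagMultiset I') : I = I' := by
  have hsorted {J : Fin m → Finset P} (hJ : Antitone J) : (List.ofFn J).Pairwise (· ⊇ ·) :=
    List.pairwise_ofFn.mpr fun _ _ hij => hJ hij.le
  exact List.ofFn_injective <| (Multiset.coe_eq_coe.mp h).eq_of_pairwise
    (fun _ _ _ _ hab hba => Finset.Subset.antisymm hba hab) (hsorted hI) (hsorted hI')

variable [DecidableEq P]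

lemma mem_iff_lt_card_filter {I : Fin m → Finset P} (hI : Antitone I) (x : P) (i : Fin m) :
    x ∈ I i ↔ (i : ℕ) < (univ.filter fun j => x ∈ I j).card := by
  constructor
  · intro hx
    have hsub : Iic i ⊆ univ.filter fun j => x ∈ I j := fun j hj =>
      mem_filter.mpr ⟨mem_univ _, hI (mem_Iic.mp hj) hx⟩
    simpa using card_le_card hsub
  · intro hlt
    by_contra hx
    have hsub : (univ.filter fun j => x ∈ I j) ⊆ Iio i := fun j hj =>
      mem_Iio.mpr (lt_of_not_ge fun hij => hx (hI hij (mem_filter.mp hj).2))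
    simpa using hlt.trans_le (card_le_card hsub)

lemma flagMultiset_eq_flagOf [Fintype P] {I : Fin m → Finset P} (hI : Antitone I) :
    flagMultiset I = flagOf (fun x => (univ.filter fun i => x ∈ I i).card) m := by
  have hlevel :
      I = fun i : Fin m => superlevel (fun x => (univ.filter fun j => x ∈ I j).card) i := by
    funext i
    ext x
    rw [mem_superlevel, mem_iff_lt_card_filter hI]
  rw [flagOf, ← hlevel]

lemma antitone_card_filter_mem [PartialOrder P] {I : Fin m → Finset P}
    (hI : ∀ j, IsLowerSet (↑(I j) : Set P)) :
    Antitone fun x => (univ.filter fun i => x ∈ I i).card := fun _ _ hxy =>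
  card_le_card fun i hi => mem_filter.mpr ⟨mem_univ _, hI i hxy (mem_filter.mp hi).2⟩

end FlagMultiset

section GravityOrder

variable {P : Type} [DecidableEq P] {p : ℕ} (ℓ : P ≃ Fin p)

noncomputable def sortedKeys (M : Multiset (Finset P)) : List (ℕ ×ₗ List (Fin p)) :=
  (M.map (idealKey ℓ)).sort (· ≤ ·)

lemma idealKey_lt_of_card_lt {J F : Finset P} (h : J.card < F.card) :
    idealKey ℓ F < idealKey ℓ J := by
  have hF : F.card ≤ p := by simpa using card_le_univ (F.map ℓ.toEmbedding)
  exact Prod.Lex.lt_iff.mpr (Or.inl (show p - F.card < p - J.card by omega))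

lemma idealKey_le_of_subset {J F : Finset P} (h : J ⊆ F) : idealKey ℓ F ≤ idealKey ℓ J := by
  rcases (card_le_card h).lt_or_eq with hlt | heq
  · exact (idealKey_lt_of_card_lt ℓ hlt).le
  · rw [eq_of_subset_of_card_le h heq.ge]

lemma sortedKeys_cons {F : Finset P} {M : Multiset (Finset P)}
    (h : ∀ J ∈ M, idealKey ℓ F ≤ idealKey ℓ J) :
    sortedKeys ℓ (F ::ₘ M) = idealKey ℓ F :: sortedKeys ℓ M := by
  rw [sortedKeys, Multiset.map_cons, Multiset.sort_cons]
  · rfl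
  · intro k hk
    obtain ⟨J, hJ, rfl⟩ := Multiset.mem_map.mp hk
    exact h J hJ

noncomputable def gravityKey (M : Multiset (Finset P)) : ℕᵒᵈ ×ₗ List (ℕ ×ₗ List (Fin p)) :=
  toLex (OrderDual.toDual (M.map Finset.card).sum, sortedKeys ℓ M)

lemma gravityKey_lt_of_gravityM {M N : Multiset (Finset P)} (h : gravityM ℓ M N) :
    gravityKey ℓ M < gravityKey ℓ N := by
  rw [gravityKey, gravityKey, Prod.Lex.lt_iff]
  exact h.imp OrderDual.toDual_lt_toDual.mpr fun h => ⟨congrArg OrderDual.toDual h.1, h.2⟩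

variable [Fintype P] [PartialOrder P] {Γ : Type} {κ : P → Γ} {φ : P → ℕ}

lemma subset_superlevel_zero (hφ : Antitone φ) {M : Multiset (Finset P)}
    (hdom : IsDominated κ (profile M) φ) {J : Finset P} (hJ : J ∈ M) : J ⊆ superlevel φ 0 :=
  fun x hx => by
    obtain ⟨w, -, hxw, hw⟩ := hdom.exists_pos (profile_pos hJ hx)
    exact mem_superlevel.mpr (hw.trans_le (hφ hxw))

lemma IsDominated.of_cons_superlevel_zero {M : Multiset (Finset P)}
    (hdom : IsDominated κ (profile (superlevel φ 0 ::ₘ M)) φ) :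
    IsDominated κ (profile M) (fun x => φ x - 1) := by
  have hφ : φ = profile {superlevel φ 0} + fun x => φ x - 1 := by
    funext x
    simp only [Pi.add_apply, profile_singleton, mem_superlevel]
    split_ifs <;> omega
  rw [← Multiset.singleton_add, profile_add] at hdom
  refine IsDominated.of_add_left (h := profile {superlevel φ 0}) ?_
  rwa [← hφ]

theorem eq_flagOf_or_lex_lt (hφ : Antitone φ) {m : ℕ} {M : Multiset (Finset P)}
    (hcard : Multiset.card M = m) (hdom : IsDominated κ (profile M) φ) :
    M = flagOf φ m ∨ List.Lex (· < ·) (sortedKeys ℓ (flagOf φ m)) (sortedKeys ℓ M) := by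
  induction m generalizing φ M with
  | zero => exact Or.inl (Multiset.card_eq_zero.mp hcard)
  | succ m ih =>
    set F := superlevel φ 0
    have hflag : ∀ J ∈ flagOf (fun x => φ x - 1) m, idealKey ℓ F ≤ idealKey ℓ J := by
      intro J hJ
      obtain ⟨i, -, rfl⟩ := exists_eq_superlevel_of_mem_flagOf hJ
      exact idealKey_le_of_subset ℓ (superlevel_subset_superlevel fun x hx => by omega)
    rw [flagOf_succ, sortedKeys_cons ℓ hflag]
    by_cases hF : F ∈ M
    · obtain ⟨M', rfl⟩ : ∃ M', M = F ::ₘ M' := ⟨M.erase F, (Multiset.cons_erase hF).symm⟩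
      have hM' : ∀ J ∈ M', idealKey ℓ F ≤ idealKey ℓ J := fun J hJ =>
        idealKey_le_of_subset ℓ (subset_superlevel_zero hφ hdom (Multiset.mem_cons_of_mem hJ))
      rw [sortedKeys_cons ℓ hM']
      rcases ih (fun x y hxy => Nat.sub_le_sub_right (hφ hxy) 1) (by simpa using hcard)
        hdom.of_cons_superlevel_zero with h | h
      · exact Or.inl (h ▸ rfl)
      · exact Or.inr (List.Lex.cons h)
    · right
      have hlt : ∀ J ∈ M, idealKey ℓ F < idealKey ℓ J := fun J hJ =>
        idealKey_lt_of_card_lt ℓ <| card_lt_card <|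
          ssubset_of_subset_of_ne (subset_superlevel_zero hφ hdom hJ) fun h => hF (h ▸ hJ)
      have hne : sortedKeys ℓ M ≠ [] := by
        rw [← List.length_pos_iff, sortedKeys, Multiset.length_sort, Multiset.card_map, hcard]
        omega
      obtain ⟨k, ks, hks⟩ := List.exists_cons_of_ne_nil hne
      have hk : k ∈ M.map (idealKey ℓ) := by
        rw [← Multiset.mem_sort (· ≤ ·), ← sortedKeys, hks]
        exact List.mem_cons_self
      obtain ⟨J, hJ, rfl⟩ := Multiset.mem_map.mp hk
      rw [hks]
      exact List.Lex.rel (hlt J hJ)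

end GravityOrder

section Admissible

variable {P Γ : Type} [Fintype P] [PartialOrder P] [DecidableEq P] {κ : P → Γ}

def Admissible (κ : P → Γ) (m : ℕ) (φ : P → ℕ) (M : Multiset (Finset P)) : Prop :=
  Multiset.card M = m ∧ (M.map Finset.card).sum = ∑ x, φ x ∧ IsDominated κ (profile M) φ

variable {m : ℕ} {φ : P → ℕ} {M : Multiset (Finset P)} {x₀ y : P} {J : Finset P}

/-- If `x₀ < y`, the element `z` covering `x₀` below `y` has a different color (ND), so it lies in
`J`, and domination produces an element above `z` of positive weight, where `φ` vanishes. -/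
lemma le_of_isLowerSet_insert (hEC : ∀ x y : P, κ x = κ y → x ≤ y ∨ y ≤ x)
    (hND : ∀ x y : P, x ⋖ y → κ x ≠ κ y) (hdom : IsDominated κ (profile M) φ)
    (hφ : ∀ w, x₀ < w → φ w = 0) (hJ : J ∈ M) (hy : κ y = κ x₀)
    (hlower : IsLowerSet (↑(insert y J) : Set P)) : y ≤ x₀ := by
  by_contra hyx
  have hlt : x₀ < y := ((hEC y x₀ hy).resolve_left hyx).lt_of_ne fun h => hyx h.ge
  obtain ⟨z, hcov, hzy⟩ := hlt.exists_covby_le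
  have hzy' : z < y := hzy.lt_of_ne fun h => hND x₀ z hcov (h ▸ hy.symm)
  have hzJ : z ∈ J := by
    simpa [hzy'.ne] using hlower hzy'.le (by simp : y ∈ (↑(insert y J) : Set P))
  obtain ⟨w, -, hzw, hw⟩ := hdom.exists_pos (profile_pos hJ hzJ)
  exact hw.ne' (hφ w (hcov.lt.trans_le hzw))

lemma Admissible.grow (hEC : ∀ x y : P, κ x = κ y → x ≤ y ∨ y ≤ x)
    (hND : ∀ x y : P, x ⋖ y → κ x ≠ κ y) (hM : Admissible κ m φ M)
    (hφ : ∀ w, x₀ < w → φ w = 0) (hJ : J ∈ M) (hy : κ y = κ x₀) (hyJ : y ∉ J)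
    (hlower : IsLowerSet (↑(insert y J) : Set P)) :
    Admissible κ m (φ + Pi.single x₀ 1) (M.erase J + {insert y J}) := by
  obtain ⟨hcard, hsum, hdom⟩ := hM
  have hyx := le_of_isLowerSet_insert hEC hND hdom hφ hJ hy hlower
  obtain ⟨E, rfl⟩ : ∃ E, M = J ::ₘ E := ⟨M.erase J, (Multiset.cons_erase hJ).symm⟩
  rw [Multiset.erase_cons_head]
  refine ⟨by simpa using hcard, ?_, ?_⟩
  · simp only [Multiset.map_cons, Multiset.sum_cons, Multiset.map_add, Multiset.sum_add,
      Multiset.map_singleton, Multiset.sum_singleton, card_insert_of_notMem hyJ] at hsum ⊢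
    simp only [Pi.add_apply, sum_add_distrib, sum_pi_single', mem_univ, if_true]
    omega
  · have hprofile : profile (E + {insert y J}) = profile (J ::ₘ E) + Pi.single y 1 := by
      rw [profile_add, profile_insert hyJ, ← Multiset.singleton_add, profile_add]
      abel
    rw [hprofile]
    exact hdom.add (isDominated_single hy hyx)

end Admissible

lemma antitone_add_single {P : Type} [PartialOrder P] [DecidableEq P] {φ : P → ℕ} {x₀ : P}
    (hφ : Antitone φ) (habove : ∀ w, x₀ < w → φ w = 0) (hx₀ : φ x₀ = 0)
    {t : ℕ} (hbelow : ∀ z < x₀, t ≤ φ z) : Antitone (φ + Pi.single x₀ t) := by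
  intro x y hxy
  simp only [Pi.add_apply, Pi.single_apply]
  split_ifs with hy hx hx
  · subst hx hy; exact le_rfl
  · subst hy; have := hbelow x (hxy.lt_of_ne hx); omega
  · subst hx; have := habove y (hxy.lt_of_ne (Ne.symm hy)); omega
  · simpa using hφ hxy

section Stackwise

variable {P Γ : Type} [Fintype P] [PartialOrder P] [DecidableEq P] {κ : P → Γ} {m : ℕ}

def FlagControlled (κ : P → Γ) (m : ℕ) (φ : P → ℕ) (v : Multiset (Finset P) →₀ ℚ) : Prop :=
  0 ≤ v ∧ 0 < v (flagOf φ m) ∧ v ∈ Finsupp.supported ℚ ℚ {N | Admissible κ m φ N}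

lemma flagControlled_single_replicate :
    FlagControlled κ m 0 (Finsupp.single (Multiset.replicate m ∅) 1) := by
  have hflag : flagOf (0 : P → ℕ) m = Multiset.replicate m ∅ := by
    have hlevel : (fun i : Fin m => superlevel (0 : P → ℕ) i) = fun _ => ∅ := by
      funext i
      ext x
      simp [mem_superlevel]
    rw [flagOf, hlevel, flagMultiset, List.ofFn_const, Multiset.coe_replicate]
  have hprofile : profile (Multiset.replicate m (∅ : Finset P)) = 0 := by
    funext z
    exact Multiset.countP_eq_zero.mpr fun J hJ => by simp [Multiset.eq_of_mem_replicate hJ]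
  refine ⟨Finsupp.single_nonneg.mpr zero_le_one, by simp [hflag],
    Finsupp.single_mem_supported ℚ _ ⟨Multiset.card_replicate _ _, by simp, ?_⟩⟩
  rw [hprofile]
  exact fun _ => le_rfl

variable {φ : P → ℕ} {v : Multiset (Finset P) →₀ ℚ} {x₀ : P}

lemma FlagControlled.smul (h : FlagControlled κ m φ v) {c : ℚ} (hc : 0 < c) :
    FlagControlled κ m φ (c • v) :=
  ⟨smul_nonneg hc.le h.1, by simpa using mul_pos hc h.2.1, Submodule.smul_mem _ c h.2.2⟩

lemma FlagControlled.map_Xv (hEC : ∀ x y : P, κ x = κ y → x ≤ y ∨ y ≤ x)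
    (hND : ∀ x y : P, x ⋖ y → κ x ≠ κ y) (h : FlagControlled κ m φ v) (hφ : Antitone φ)
    (habove : ∀ w, x₀ < w → φ w = 0) (hbelow : ∀ z < x₀, φ x₀ < φ z) (hm : φ x₀ < m) :
    FlagControlled κ m (φ + Pi.single x₀ 1) (Xv κ (κ x₀) v) := by
  obtain ⟨hv, hflag, hsupp⟩ := h
  refine ⟨Xv_nonneg hv, ?_, Xv_mem_supported fun M hM => ?_⟩
  · have hF : superlevel φ (φ x₀) ∈ flagOf φ m :=
      Multiset.mem_coe.mpr (List.mem_ofFn.mpr ⟨⟨φ x₀, hm⟩, rfl⟩)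
    have hx₀ : x₀ ∉ superlevel φ (φ x₀) := by simp [mem_superlevel]
    have hstep := Finsupp.le_def.mp (single_le_XaM κ (κ x₀) hF rfl hx₀
      (isLowerSet_insert_superlevel hφ hbelow)) ((flagOf φ m).erase (superlevel φ (φ x₀)) +
        {insert x₀ (superlevel φ (φ x₀))})
    rw [Finsupp.single_eq_same] at hstep
    rw [flagOf_add_single hm]
    calc (0 : ℚ) < v (flagOf φ m) * 1 := by simpa using hflag
      _ ≤ (v (flagOf φ m) • XaM κ (κ x₀) (flagOf φ m)) _ :=
        mul_le_mul_of_nonneg_left hstep hflag.le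
      _ ≤ _ := Finsupp.le_def.mp (smul_XaM_le_Xv hv _) _
  · have hM : Admissible κ m φ M :=
      (Finsupp.mem_supported _ _).mp hsupp (Finsupp.mem_support_iff.mpr hM)
    refine Finsupp.supported_mono (fun N hN => ?_) (XaM_mem_supported κ (κ x₀) M)
    obtain ⟨J, hJ, y, hy, hyJ, hlower, rfl⟩ := hN
    exact hM.grow hEC hND habove hJ hy hyJ hlower

lemma FlagControlled.iterate_map_Xv (hEC : ∀ x y : P, κ x = κ y → x ≤ y ∨ y ≤ x)
    (hND : ∀ x y : P, x ⋖ y → κ x ≠ κ y) (h : FlagControlled κ m φ v) (hφ : Antitone φ)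
    (habove : ∀ w, x₀ < w → φ w = 0) (hx₀ : φ x₀ = 0) {k : ℕ} (hkm : k ≤ m)
    (hbelow : ∀ z < x₀, k ≤ φ z) :
    FlagControlled κ m (φ + Pi.single x₀ k) ((Xv κ (κ x₀))^[k] v) := by
  induction k with
  | zero => simpa using h
  | succ t ih =>
    rw [Function.iterate_succ_apply', Pi.single_add, ← add_assoc]
    refine (ih (by omega) fun z hz => (hbelow z hz).trans' (by omega)).map_Xv hEC hND
      (antitone_add_single hφ habove hx₀ fun z hz => (hbelow z hz).trans' (by omega))
      (fun w hw => by simp [habove w hw, hw.ne']) (fun z hz => ?_) ?_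
    · have := hbelow z hz
      simp only [Pi.add_apply, Pi.single_eq_same, Pi.single_eq_of_ne hz.ne, hx₀]
      omega
    · simp only [Pi.add_apply, Pi.single_eq_same, hx₀]
      omega

lemma FlagControlled.map_opPow (hEC : ∀ x y : P, κ x = κ y → x ≤ y ∨ y ≤ x)
    (hND : ∀ x y : P, x ⋖ y → κ x ≠ κ y) (h : FlagControlled κ m φ v) (hφ : Antitone φ)
    (habove : ∀ w, x₀ < w → φ w = 0) (hx₀ : φ x₀ = 0) {k : ℕ} (hkm : k ≤ m)
    (hbelow : ∀ z < x₀, k ≤ φ z) :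
    FlagControlled κ m (φ + Pi.single x₀ k) (opPow κ (κ x₀) k v) :=
  (h.iterate_map_Xv hEC hND hφ habove hx₀ hkm hbelow).smul (by positivity)

variable {p : ℕ} (ℓ : P ≃ Fin p)

lemma flagControlled_foldl_take (hEC : ∀ x y : P, κ x = κ y → x ≤ y ∨ y ≤ x)
    (hND : ∀ x y : P, x ⋖ y → κ x ≠ κ y) (hℓ : StrictMono ℓ) {ψ : P → ℕ} (hψ : Antitone ψ)
    (hψm : ∀ x, ψ x ≤ m) {n : ℕ} (hn : n ≤ p) :
    FlagControlled κ m (fun x => if (ℓ x : ℕ) < n then ψ x else 0)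
      (((List.ofFn fun j : Fin p => (κ (ℓ.symm j), ψ (ℓ.symm j))).take n).foldl
        (fun v pr => opPow κ pr.1 pr.2 v) (Finsupp.single (Multiset.replicate m ∅) 1)) := by
  induction n with
  | zero =>
    simp only [Nat.not_lt_zero, if_false, List.take_zero, List.foldl_nil]
    exact flagControlled_single_replicate
  | succ n ih =>
    set x₀ := ℓ.symm ⟨n, hn⟩
    have hx₀ : (ℓ x₀ : ℕ) = n := by simp [x₀]
    have hprofile : (fun x => if (ℓ x : ℕ) < n + 1 then ψ x else 0) =
        (fun x => if (ℓ x : ℕ) < n then ψ x else 0) + Pi.single x₀ (ψ x₀) := by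
      funext x
      by_cases hx : x = x₀
      · subst hx; simp [hx₀]
      · have : (ℓ x : ℕ) ≠ n := fun h => hx (ℓ.injective (Fin.ext (h.trans hx₀.symm)))
        simp only [Pi.add_apply, Pi.single_apply, hx, if_false, add_zero]
        split_ifs <;> omega
    rw [List.take_add_one, List.getElem?_ofFn, dif_pos (by omega), Option.toList_some,
      List.foldl_append, List.foldl_cons, List.foldl_nil, hprofile]
    refine (ih (by omega)).map_opPow hEC hND ?_ ?_ (by simp [hx₀]) (hψm x₀) ?_
    · intro x y hxy
      have : (ℓ x : ℕ) ≤ ℓ y := hℓ.monotone hxy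
      dsimp only
      split_ifs <;> first | omega | exact hψ hxy
    · intro w hw
      have : n < (ℓ w : ℕ) := hx₀ ▸ hℓ hw
      exact if_neg (by omega)
    · intro z hz
      have : (ℓ z : ℕ) < n := hx₀ ▸ hℓ hz
      rw [if_pos this]
      exact hψ hz.le

theorem flagControlled_stackVec (hEC : ∀ x y : P, κ x = κ y → x ≤ y ∨ y ≤ x)
    (hND : ∀ x y : P, x ⋖ y → κ x ≠ κ y) (hℓ : StrictMono ℓ) {I : Fin m → Finset P}
    (hI : ∀ j, IsLowerSet (↑(I j) : Set P)) :
    FlagControlled κ m (fun x => (univ.filter fun i => x ∈ I i).card) (stackVec κ ℓ m I) := by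
  have h := flagControlled_foldl_take ℓ hEC hND hℓ (antitone_card_filter_mem hI)
    (fun x => (card_filter_le _ _).trans (card_fin m).le) le_rfl
  rw [List.take_of_length_le (by simp)] at h
  simp only [Fin.is_lt, if_true] at h
  exact h

theorem FlagControlled.leading_flagOf (h : FlagControlled κ m φ v) (hφ : Antitone φ) :
    flagOf φ m ∈ v.support ∧ ∀ M ∈ v.support, M ≠ flagOf φ m → gravityM ℓ (flagOf φ m) M := by
  obtain ⟨-, hflag, hsupp⟩ := h
  have hadm : ∀ M ∈ v.support, Admissible κ m φ M := fun M hM =>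
    (Finsupp.mem_supported _ _).mp hsupp hM
  have hmem : flagOf φ m ∈ v.support := Finsupp.mem_support_iff.mpr hflag.ne'
  refine ⟨hmem, fun M hM hne => ?_⟩
  obtain ⟨hcard, hsum, hdom⟩ := hadm M hM
  exact Or.inr ⟨(hadm _ hmem).2.1.trans hsum.symm,
    (eq_flagOf_or_lex_lt ℓ hφ hcard hdom).resolve_left hne⟩

end Stackwise

theorem stmt12_general (P Γ : Type) [Fintype P] [PartialOrder P] [DecidableEq P]
    (κ : P → Γ)
    (hEC : ∀ x y : P, κ x = κ y → x ≤ y ∨ y ≤ x)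
    (hND : ∀ x y : P, x ⋖ y → κ x ≠ κ y)
    (p : ℕ) (ℓ : P ≃ Fin p) (hℓ : ∀ x y : P, x ≤ y → ℓ x ≤ ℓ y)
    (m : ℕ) :
    (∀ I : Fin m → Finset P, (∀ j, IsLowerSet (↑(I j) : Set P)) → Antitone I →
      flagMultiset I ∈ (stackVec κ ℓ m I).support ∧
      ∀ M ∈ (stackVec κ ℓ m I).support, M ≠ flagMultiset I → gravityM ℓ (flagMultiset I) M) ∧
    (∀ I I' : Fin m → Finset P,
      (∀ j, IsLowerSet (↑(I j) : Set P)) → Antitone I →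
      (∀ j, IsLowerSet (↑(I' j) : Set P)) → Antitone I' →
      I ≠ I' → flagMultiset I ≠ flagMultiset I') ∧
    LinearIndependent ℚ
      (fun F : {I : Fin m → Finset P // (∀ j, IsLowerSet (↑(I j) : Set P)) ∧ Antitone I} =>
        stackVec κ ℓ m F.1) := by
  have hℓ' : StrictMono ℓ := Monotone.strictMono_of_injective (fun x y h => hℓ x y h) ℓ.injective
  have leading (I : Fin m → Finset P) (hI : ∀ j, IsLowerSet (↑(I j) : Set P)) (hanti : Antitone I) :
      flagMultiset I ∈ (stackVec κ ℓ m I).support ∧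
        ∀ M ∈ (stackVec κ ℓ m I).support, M ≠ flagMultiset I →
          gravityM ℓ (flagMultiset I) M := by
    rw [flagMultiset_eq_flagOf hanti]
    exact (flagControlled_stackVec ℓ hEC hND hℓ' hI).leading_flagOf ℓ (antitone_card_filter_mem hI)
  refine ⟨leading, fun I I' _ hI _ hI' hne h => hne (flagMultiset_injective hI hI' h), ?_⟩
  exact linearIndependent_of_leading _ (fun F => flagMultiset F.1) (gravityKey ℓ)
    (fun F G h => Subtype.ext (flagMultiset_injective F.2.2 G.2.2 h))
    (fun F => Finsupp.mem_support_iff.mp (leading F.1 F.2.1 F.2.2).1)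
    (fun F M hM hne => gravityKey_lt_of_gravityM ℓ ((leading F.1 F.2.1 F.2.2).2 M hM hne))

/-- Lemma 4.4 and Proposition 4.6: over a finite `Γ`-colored poset satisfying EC and
ND, with a fixed linear extension and `m ≥ 1`: each `m`-stackwise vector has the
multiset of its `m`-flag as its unique gravity-minimal (leading) term, distinct
`m`-flags have distinct leading terms, and the `m`-stackwise vectors are linearly
independent. -/
theorem stmt12 (P Γ : Type) [Fintype P] [PartialOrder P] [DecidableEq P] [Nonempty P]
    (κ : P → Γ) (hsurj : Function.Surjective κ)
    (hEC : ∀ x y : P, κ x = κ y → x ≤ y ∨ y ≤ x)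
    (hND : ∀ x y : P, x ⋖ y → κ x ≠ κ y)
    (p : ℕ) (ℓ : P ≃ Fin p) (hℓ : ∀ x y : P, x ≤ y → ℓ x ≤ ℓ y)
    (m : ℕ) (hm : 1 ≤ m) :
    (∀ I : Fin m → Finset P, (∀ j, IsLowerSet (↑(I j) : Set P)) → Antitone I →
      flagMultiset I ∈ (stackVec κ ℓ m I).support ∧
      ∀ M ∈ (stackVec κ ℓ m I).support, M ≠ flagMultiset I → gravityM ℓ (flagMultiset I) M) ∧
    (∀ I I' : Fin m → Finset P,
      (∀ j, IsLowerSet (↑(I j) : Set P)) → Antitone I →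
      (∀ j, IsLowerSet (↑(I' j) : Set P)) → Antitone I' →
      I ≠ I' → flagMultiset I ≠ flagMultiset I') ∧
    LinearIndependent ℚ
      (fun F : {I : Fin m → Finset P // (∀ j, IsLowerSet (↑(I j) : Set P)) ∧ Antitone I} =>
        stackVec κ ℓ m F.1) :=
  stmt12_general P Γ κ hEC hND p ℓ hℓ m
end

section
/- Let P be a finite Γ-colored poset and suppose colors b, c ∈ Γ are never the colors of two neighboring elements (elements in a covering relation) of P. Then for all p, q ≥ 0 and m ≥ 1, the operators ⟨c^q⟩∘⟨b^p⟩ and ⟨b^p⟩∘⟨c^q⟩ agree on all m-tuples of order ideals of P (operator commutation for distant colors). -/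
open scoped Classical

/-- The raising operator `X_a` applied to a single `m`-tuple of ideals: add a minimal
element of color `a` of the complementary filter to one coordinate, summed over all
coordinates and all such elements. -/
noncomputable def XaT {P Γ : Type} [Fintype P] [PartialOrder P] [DecidableEq P]
    (κ : P → Γ) {m : ℕ} (a : Γ) (T : Fin m → Finset P) : (Fin m → Finset P) →₀ ℚ :=
  ∑ j : Fin m,
    ((addSet κ a (T j)).val.map (fun J => Finsupp.single (Function.update T j J) (1 : ℚ))).sum

/-- The linear extension of `X_a` to formal `ℚ`-linear combinations of `m`-tuples. -/
noncomputable def XvT {P Γ : Type} [Fintype P] [PartialOrder P] [DecidableEq P]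
    (κ : P → Γ) {m : ℕ} (a : Γ) (v : (Fin m → Finset P) →₀ ℚ) : (Fin m → Finset P) →₀ ℚ :=
  v.sum (fun T c => c • XaT κ a T)

/-- The divided power operator `⟨a^k⟩ = X_a^k / k!` on `m`-tuples of ideals. -/
noncomputable def opPowT {P Γ : Type} [Fintype P] [PartialOrder P] [DecidableEq P]
    (κ : P → Γ) {m : ℕ} (a : Γ) (k : ℕ) (v : (Fin m → Finset P) →₀ ℚ) :
    (Fin m → Finset P) →₀ ℚ :=
  ((k.factorial : ℚ)⁻¹) • (XvT κ a)^[k] v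

/-!
Both composites `X_c ∘ X_b` and `X_b ∘ X_c`, applied to a tuple of ideals, are sums over the ways of
adding one element to one coordinate and then another element to some coordinate. Terms using two
different coordinates match directly. Within one ideal `I`, if `x` of color `b` is addable to `I` and
then `y` of color `c` to `I ∪ {x}`, the two can be added in the opposite order: `x < y` would give a
cover `x ⋖ w ≤ y`, where `w = y` is excluded by the colors and `w < y` forces `w ∈ I`, hence `x ∈ I`.
So `X_b` and `X_c` commute on the span of ideal tuples, which both preserve, and so do their powers.
-/

namespace Finsupp

variable {ι R : Type*} [CommSemiring R] {s : Set ι}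

theorem mem_supported_of_forall_single {f : (ι →₀ R) →ₗ[R] (ι →₀ R)}
    (hf : ∀ i ∈ s, f (single i 1) ∈ supported R R s) {v : ι →₀ R}
    (hv : v ∈ supported R R s) : f v ∈ supported R R s := by
  rw [supported_eq_span_single] at hv
  induction hv using Submodule.span_induction with
  | mem _ h => obtain ⟨i, hi, rfl⟩ := h; exact hf i hi
  | zero => rw [map_zero]; exact zero_mem _
  | add _ _ _ _ hx hy => rw [map_add]; exact add_mem hx hy
  | smul r _ _ hx => rw [map_smul]; exact Submodule.smul_mem _ r hx

theorem pow_apply_comm_of_forall_single {f g : Module.End R (ι →₀ R)}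
    (hf : ∀ i ∈ s, f (single i 1) ∈ supported R R s)
    (hg : ∀ i ∈ s, g (single i 1) ∈ supported R R s)
    (hfg : ∀ i ∈ s, f (g (single i 1)) = g (f (single i 1))) (p q : ℕ) {v : ι →₀ R}
    (hv : v ∈ supported R R s) : (f ^ q) ((g ^ p) v) = (g ^ p) ((f ^ q) v) := by
  have hf' : ∀ v ∈ supported R R s, f v ∈ supported R R s :=
    fun _ => mem_supported_of_forall_single hf
  have hg' : ∀ v ∈ supported R R s, g v ∈ supported R R s :=
    fun _ => mem_supported_of_forall_single hg
  have hcomm : Commute (f.restrict hf') (g.restrict hg') := by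
    refine LinearMap.ext fun ⟨w, hw⟩ => Subtype.ext ?_
    change f (g w) = g (f w)
    rw [supported_eq_span_single] at hw
    induction hw using Submodule.span_induction with
    | mem _ h => obtain ⟨i, hi, rfl⟩ := h; exact hfg i hi
    | zero => simp
    | add _ _ _ _ hx hy => simp [hx, hy]
    | smul r _ _ hx => simp [hx]
  have := congr($((hcomm.pow_pow q p).eq) ⟨v, hv⟩)
  rw [Module.End.pow_restrict q hf', Module.End.pow_restrict p hg'] at this
  exact congr(Subtype.val $this)

end Finsupp

theorem IsLowerSet.insert_iff {α : Type*} [PartialOrder α] {s : Set α} (hs : IsLowerSet s)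
    {a : α} : IsLowerSet (insert a s) ↔ ∀ b < a, b ∈ s := by
  refine ⟨fun h b hba => ?_, fun h u v hvu hu => ?_⟩
  · exact (h hba.le (Set.mem_insert a s)).resolve_left hba.ne
  · rcases hu with rfl | hu
    · exact hvu.eq_or_lt.imp id (h v)
    · exact Or.inr (hs hvu hu)

section Addable

variable {P Γ : Type} [Fintype P] [PartialOrder P] [DecidableEq P]

noncomputable def addable (κ : P → Γ) (a : Γ) (I : Finset P) : Finset P :=
  Finset.univ.filter (fun x : P => κ x = a ∧ x ∉ I ∧
    IsLowerSet ((insert x I : Finset P) : Set P))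

theorem mem_addable {κ : P → Γ} {a : Γ} {I : Finset P} {x : P} :
    x ∈ addable κ a I ↔ κ x = a ∧ x ∉ I ∧ IsLowerSet ((insert x I : Finset P) : Set P) := by
  simp [addable]

theorem mem_addable_iff {κ : P → Γ} {a : Γ} {I : Finset P} (hI : IsLowerSet (I : Set P))
    {x : P} : x ∈ addable κ a I ↔ κ x = a ∧ x ∉ I ∧ ∀ z < x, z ∈ I := by
  rw [mem_addable, Finset.coe_insert, hI.insert_iff]
  rfl

theorem addable_swap {κ : P → Γ} {b c : Γ} (hbc : ∀ x y : P, x ⋖ y → ¬ (κ x = b ∧ κ y = c))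
    {I : Finset P} (hI : IsLowerSet (I : Set P)) {x y : P}
    (hx : x ∈ addable κ b I) (hy : y ∈ addable κ c (insert x I)) :
    y ∈ addable κ c I ∧ x ∈ addable κ b (insert y I) := by
  obtain ⟨hxb, hxI, hxlt⟩ := (mem_addable_iff hI).1 hx
  obtain ⟨hyc, hyxI, hylt⟩ := (mem_addable_iff (mem_addable.1 hx).2.2).1 hy
  obtain ⟨hyx, hyI⟩ : y ≠ x ∧ y ∉ I := by simpa using hyxI
  have hnlt : ¬ x < y := by
    intro hlt
    obtain ⟨w, hxw, hwy⟩ := hlt.exists_covby_le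
    rcases hwy.eq_or_lt with rfl | hwy
    · exact hbc x w hxw ⟨hxb, hyc⟩
    · rcases Finset.mem_insert.1 (hylt w hwy) with rfl | hwI
      · exact hxw.lt.false
      · exact hxI (hI hxw.le hwI)
  have hy' : y ∈ addable κ c I := (mem_addable_iff hI).2 ⟨hyc, hyI, fun z hz =>
    (Finset.mem_insert.1 (hylt z hz)).resolve_left (by rintro rfl; exact hnlt hz)⟩
  refine ⟨hy', (mem_addable_iff (mem_addable.1 hy').2.2).2 ⟨hxb, ?_, ?_⟩⟩
  · simpa [hyx.symm] using hxI
  · exact fun z hz => Finset.mem_insert_of_mem (hxlt z hz)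

theorem sum_addable_addable_comm {κ : P → Γ} {b c : Γ}
    (hbc : ∀ x y : P, x ⋖ y → ¬ ((κ x = b ∧ κ y = c) ∨ (κ x = c ∧ κ y = b)))
    {I : Finset P} (hI : IsLowerSet (I : Set P)) {M : Type*} [AddCommMonoid M]
    (f : Finset P → M) :
    ∑ x ∈ addable κ b I, ∑ y ∈ addable κ c (insert x I), f (insert y (insert x I)) =
      ∑ y ∈ addable κ c I, ∑ x ∈ addable κ b (insert y I), f (insert x (insert y I)) := by
  rw [Finset.sum_comm' (t' := addable κ c I) (s' := fun y => addable κ b (insert y I))]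
  · simp only [Finset.insert_comm]
  · intro x y
    constructor
    · rintro ⟨hx, hy⟩
      exact (addable_swap (fun x y h h' => hbc x y h (Or.inl h')) hI hx hy).symm
    · rintro ⟨hx, hy⟩
      exact addable_swap (fun x y h h' => hbc x y h (Or.inr h')) hI hy hx

end Addable

def idealTuples (P : Type) [PartialOrder P] (m : ℕ) : Set (Fin m → Finset P) :=
  {T | ∀ j, IsLowerSet (T j : Set P)}

section Tuples

variable {P Γ : Type} [Fintype P] [PartialOrder P] [DecidableEq P] {κ : P → Γ} {m : ℕ}

theorem XaT_eq_sum (a : Γ) (T : Fin m → Finset P) :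
    XaT κ a T = ∑ j, ∑ x ∈ addable κ a (T j),
      Finsupp.single (Function.update T j (insert x (T j))) (1 : ℚ) := by
  refine Finset.sum_congr rfl fun j _ => ?_
  refine Finset.sum_image fun x hx y _ hxy => ?_
  exact (Finset.insert_inj (mem_addable.1 hx).2.1).1 hxy

theorem XaT_mem_supported (a : Γ) {T : Fin m → Finset P} (hT : T ∈ idealTuples P m) :
    XaT κ a T ∈ Finsupp.supported ℚ ℚ (idealTuples P m) := by
  rw [XaT_eq_sum]
  refine Submodule.sum_mem _ fun j _ => Submodule.sum_mem _ fun x hx => ?_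
  refine Finsupp.single_mem_supported ℚ _ fun k => ?_
  rcases eq_or_ne k j with rfl | hkj
  · simpa using (mem_addable.1 hx).2.2
  · simpa [hkj] using hT k

theorem XvT_eq_linearCombination (a : Γ) :
    XvT κ a (m := m) = Finsupp.linearCombination ℚ (XaT κ a) :=
  funext fun v => (Finsupp.linearCombination_apply ℚ v).symm

theorem opPowT_eq (a : Γ) (k : ℕ) (v : (Fin m → Finset P) →₀ ℚ) :
    opPowT κ a k v = ((k.factorial : ℚ)⁻¹ • Finsupp.linearCombination ℚ (XaT κ a) ^ k) v := by
  rw [opPowT, XvT_eq_linearCombination, ← Module.End.coe_pow]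
  rfl

theorem linearCombination_XaT_XaT (a a' : Γ) (T : Fin m → Finset P) :
    Finsupp.linearCombination ℚ (XaT κ a') (XaT κ a T) =
      (∑ j, ∑ x ∈ addable κ a (T j), ∑ y ∈ addable κ a' (insert x (T j)),
        Finsupp.single (Function.update T j (insert y (insert x (T j)))) 1) +
      ∑ j, ∑ k ∈ Finset.univ.erase j, ∑ x ∈ addable κ a (T j), ∑ y ∈ addable κ a' (T k),
        Finsupp.single (Function.update (Function.update T j (insert x (T j))) k
          (insert y (T k))) 1 := by
  rw [XaT_eq_sum, map_sum, ← Finset.sum_add_distrib]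
  refine Finset.sum_congr rfl fun j _ => ?_
  rw [map_sum, Finset.sum_comm (s := Finset.univ.erase j), ← Finset.sum_add_distrib]
  refine Finset.sum_congr rfl fun x _ => ?_
  rw [Finsupp.linearCombination_single, one_smul, XaT_eq_sum,
    ← Finset.add_sum_erase _ _ (Finset.mem_univ j)]
  congr 1
  · simp only [Function.update_self, Function.update_idem]
  · refine Finset.sum_congr rfl fun k hk => ?_
    rw [Function.update_of_ne (Finset.ne_of_mem_erase hk)]

theorem linearCombination_XaT_comm {b c : Γ}
    (hbc : ∀ x y : P, x ⋖ y → ¬ ((κ x = b ∧ κ y = c) ∨ (κ x = c ∧ κ y = b)))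
    {T : Fin m → Finset P} (hT : T ∈ idealTuples P m) :
    Finsupp.linearCombination ℚ (XaT κ c) (XaT κ b T) =
      Finsupp.linearCombination ℚ (XaT κ b) (XaT κ c T) := by
  rw [linearCombination_XaT_XaT, linearCombination_XaT_XaT]
  congr 1
  · exact Finset.sum_congr rfl fun j _ =>
      sum_addable_addable_comm hbc (hT j) fun J => Finsupp.single (Function.update T j J) 1
  · rw [Finset.sum_comm' (t' := Finset.univ) (s' := fun k => Finset.univ.erase k)
      (by simp [ne_comm])]
    refine Finset.sum_congr rfl fun j _ => Finset.sum_congr rfl fun k hk => ?_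
    rw [Finset.sum_comm]
    simp only [Function.update_comm (Finset.ne_of_mem_erase hk)]

end Tuples

theorem stmt14_general (P Γ : Type) [Fintype P] [PartialOrder P] [DecidableEq P]
    (κ : P → Γ) (b c : Γ)
    (hbc : ∀ x y : P, x ⋖ y →
      ¬ ((κ x = b ∧ κ y = c) ∨ (κ x = c ∧ κ y = b)))
    (p q : ℕ) (m : ℕ) :
    ∀ T : Fin m → Finset P, (∀ j, IsLowerSet (↑(T j) : Set P)) →
      opPowT κ c q (opPowT κ b p (Finsupp.single T 1)) =
      opPowT κ b p (opPowT κ c q (Finsupp.single T 1)) := by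
  intro T hT
  have hcomm := Finsupp.pow_apply_comm_of_forall_single
    (f := Finsupp.linearCombination ℚ (XaT κ c)) (g := Finsupp.linearCombination ℚ (XaT κ b))
    (fun T hT => by simpa using XaT_mem_supported c hT)
    (fun T hT => by simpa using XaT_mem_supported b hT)
    (fun T hT => by simpa using linearCombination_XaT_comm hbc hT) p q
    (Finsupp.single_mem_supported ℚ 1 (show T ∈ idealTuples P m from hT))
  simp only [opPowT_eq, LinearMap.smul_apply, map_smul, hcomm]
  exact smul_comm _ _ _

/-- Proposition 5.2: if colors `b, c` are never the colors of two neighboring elements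
of the finite `Γ`-colored poset `P`, then `⟨c^q⟩∘⟨b^p⟩ = ⟨b^p⟩∘⟨c^q⟩` on all
`m`-tuples of order ideals of `P`. -/
theorem stmt14 (P Γ : Type) [Fintype P] [PartialOrder P] [DecidableEq P] [Nonempty P]
    (κ : P → Γ) (hsurj : Function.Surjective κ) (b c : Γ)
    (hbc : ∀ x y : P, x ⋖ y →
      ¬ ((κ x = b ∧ κ y = c) ∨ (κ x = c ∧ κ y = b)))
    (p q : ℕ) (m : ℕ) (hm : 1 ≤ m) :
    ∀ T : Fin m → Finset P, (∀ j, IsLowerSet (↑(T j) : Set P)) →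
      opPowT κ c q (opPowT κ b p (Finsupp.single T 1)) =
      opPowT κ b p (opPowT κ c q (Finsupp.single T 1)) :=
  stmt14_general P Γ κ b c hbc p q m
end

section
/- Let P be a finite Γ-colored poset satisfying EC, NA, AC, and ICE2. For distinct colors b, c ∈ Γ, integers m ≥ 1, and q > p ≥ 0, the alternating operator identity ∑_{k=0}^{q} (-1)^k ⟨c^{q-k}⟩∘⟨b^p⟩∘⟨c^k⟩ = 0 holds on m-tuples of order ideals of P. -/
open scoped Classical

/-!
Write `X_a = ∑ⱼ Y_{a,j}`, where `Y_{a,j}` adds an `a`-colored element to the `j`-th ideal only.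
On tuples of order ideals `Y_{c,j} Y_{c,j} = 0` and `Y_{c,j} Y_{b,j} Y_{c,j} = 0`: two `c`-colored
elements added one after the other to the same ideal are comparable by EC and consecutive in their
color, so by ICE2 two further elements lie strictly between them, but at most one was added in
between. Operators on different coordinates commute, hence `A = X_c` and `B = X_b` satisfy
`[A, [A, B]] = 0`. By the Leibniz rule `ad_A^q (B^p) = 0` for `p < q`, and expanding `ad_A^q`
gives the identity, multiplied by `q! p!`.
-/

open Finset

section Serre

variable {R : Type*} [Ring R]

theorem iterate_succ_mul_of_leibniz (D : R →+ R) (hD : ∀ x y, D (x * y) = D x * y + x * D y)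
    {b : R} (hb : D (D b) = 0) (n : ℕ) (y : R) :
    D^[n + 1] (b * y) = b * D^[n + 1] y + (n + 1) • (D b * D^[n] y) := by
  induction n with
  | zero => simp [hD, add_comm]
  | succ n ih =>
    rw [Function.iterate_succ_apply' D (n + 1), ih, map_add, map_nsmul, hD, hD, hb, zero_mul,
      zero_add]
    simp only [Function.iterate_succ_apply', add_smul, one_smul]
    abel

theorem iterate_pow_eq_zero_of_leibniz (D : R →+ R) (hD : ∀ x y, D (x * y) = D x * y + x * D y)
    {b : R} (hb : D (D b) = 0) {p q : ℕ} (hpq : p < q) : D^[q] (b ^ p) = 0 := by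
  induction p generalizing q with
  | zero =>
    obtain ⟨n, rfl⟩ := Nat.exists_eq_add_of_lt hpq
    have hD1 : D 1 = 0 := by simpa using hD 1 1
    rw [pow_zero, Function.iterate_succ_apply, hD1, iterate_map_zero]
  | succ p ih =>
    obtain ⟨n, rfl⟩ : ∃ n, q = n + 1 := ⟨q - 1, by omega⟩
    rw [pow_succ', iterate_succ_mul_of_leibniz D hD hb, ih (by omega), ih (by omega)]
    simp

theorem iterate_commutator_pow_eq_zero {a b : R} (h : Commute a (a * b - b * a)) {p q : ℕ}
    (hpq : p < q) : (fun x => a * x - x * a)^[q] (b ^ p) = 0 := by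
  let D : R →+ R := AddMonoidHom.mulLeft a - AddMonoidHom.mulRight a
  have hDapp : ⇑D = fun x => a * x - x * a := rfl
  rw [← hDapp]
  refine iterate_pow_eq_zero_of_leibniz D (fun x y => ?_) ?_ hpq
  · simp only [hDapp]
    noncomm_ring
  · simpa only [hDapp, sub_eq_zero] using h.eq

theorem iterate_commutator_eq_sum (a x : R) (q : ℕ) :
    (fun y => a * y - y * a)^[q] x =
      ∑ k ∈ range (q + 1), ((-1) ^ k * q.choose k : ℤ) • (a ^ (q - k) * x * a ^ k) := by
  have had : (fun y => a * y - y * a) = ⇑(-LinearMap.mulRight ℤ a + LinearMap.mulLeft ℤ a) := by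
    ext y; simp [sub_eq_neg_add]
  have hc : Commute (-LinearMap.mulRight ℤ a) (LinearMap.mulLeft ℤ a) :=
    (LinearMap.commute_mulLeft_right a a).symm.neg_left
  rw [had, ← Module.End.pow_apply, hc.add_pow, LinearMap.sum_apply]
  refine sum_congr rfl fun k _ => ?_
  rw [Module.End.mul_apply, Module.End.mul_apply, Module.End.natCast_apply, neg_pow,
    Module.End.mul_apply]
  simp only [LinearMap.pow_mulLeft, LinearMap.pow_mulRight, LinearMap.mulLeft_apply,
    LinearMap.mulRight_apply, map_nsmul]
  rw [show (-1 : Module.End ℤ R) ^ k = (((-1) ^ k : ℤ) : Module.End ℤ R) by push_cast; rfl,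
    Module.End.intCast_apply, mul_comm, mul_smul, natCast_zsmul]

open Nat in
theorem sum_neg_one_pow_smul_divided_powers_eq_zero [Algebra ℚ R] {a b : R}
    (h : Commute a (a * b - b * a)) {p q : ℕ} (hpq : p < q) :
    ∑ k ∈ range (q + 1), (-1 : ℚ) ^ k •
      (((q - k)! : ℚ)⁻¹ • a ^ (q - k)) * ((p ! : ℚ)⁻¹ • b ^ p) * ((k ! : ℚ)⁻¹ • a ^ k) = 0 := by
  have hterm : ∀ k ∈ range (q + 1), (-1 : ℚ) ^ k •
      (((q - k)! : ℚ)⁻¹ • a ^ (q - k)) * ((p ! : ℚ)⁻¹ • b ^ p) * ((k ! : ℚ)⁻¹ • a ^ k) =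
      ((q ! : ℚ)⁻¹ * (p ! : ℚ)⁻¹) •
        ((-1) ^ k * q.choose k : ℤ) • (a ^ (q - k) * b ^ p * a ^ k) := by
    intro k hk
    rw [← Int.cast_smul_eq_zsmul ℚ, smul_smul, smul_mul_smul_comm, smul_mul_smul_comm, smul_smul]
    congr 1
    rw [Int.cast_mul, Int.cast_pow, Int.cast_neg, Int.cast_one, Int.cast_natCast,
      Nat.cast_choose ℚ (Nat.lt_succ_iff.mp (mem_range.mp hk))]
    field_simp
  rw [sum_congr rfl hterm, ← smul_sum, ← iterate_commutator_eq_sum,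
    iterate_commutator_pow_eq_zero h hpq, smul_zero]

theorem commute_sum_sum_sub_sum_mul_sum {ι : Type*} (s : Finset ι) {y z : ι → R}
    (hyy : Pairwise fun i j => Commute (y i) (y j)) (hyz : Pairwise fun i j => Commute (y i) (z j))
    (hy : ∀ j, y j * y j = 0) (hyzy : ∀ j, y j * z j * y j = 0) :
    Commute (∑ i ∈ s, y i) ((∑ i ∈ s, y i) * ∑ i ∈ s, z i - (∑ i ∈ s, z i) * ∑ i ∈ s, y i) := by
  have hdiag : (∑ i ∈ s, y i) * ∑ i ∈ s, z i - (∑ i ∈ s, z i) * ∑ i ∈ s, y i =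
      ∑ i ∈ s, (y i * z i - z i * y i) := by
    rw [sum_mul_sum, sum_mul_sum, sum_comm (f := fun i j => z i * y j), ← sum_sub_distrib]
    refine sum_congr rfl fun i hi => ?_
    rw [← sum_sub_distrib]
    exact sum_eq_single_of_mem i hi fun j _ hji => sub_eq_zero.2 (hyz hji.symm).eq
  rw [hdiag]
  refine Commute.sum_left _ _ _ fun i _ => Commute.sum_right _ _ _ fun j _ => ?_
  obtain rfl | hij := eq_or_ne i j
  · have hleft : y i * (y i * z i - z i * y i) = 0 := by
      rw [mul_sub, ← mul_assoc, ← mul_assoc, hy, hyzy, zero_mul, sub_zero]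
    have hright : (y i * z i - z i * y i) * y i = 0 := by
      rw [sub_mul, mul_assoc (z i), hy, mul_zero, hyzy, sub_zero]
    exact hleft.trans hright.symm
  · exact ((hyy hij).mul_right (hyz hij)).sub_right ((hyz hij).mul_right (hyy hij))

end Serre

section Combinatorics

variable {P Γ : Type} [Fintype P] [PartialOrder P]

def EC (κ : P → Γ) : Prop :=
  ∀ x y : P, κ x = κ y → x ≤ y ∨ y ≤ x

def ICE2 (G : SimpleGraph Γ) (κ : P → Γ) : Prop :=
  ∀ x y : P, κ x = κ y → x < y → (∀ z : P, κ z = κ x → ¬ (x < z ∧ z < y)) →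
    (univ.filter fun z : P => x < z ∧ z < y ∧ G.Adj (κ z) (κ x)).card = 2

theorem two_le_card_of_forall_between_mem {G : SimpleGraph Γ} {κ : P → Γ} (hICE2 : ICE2 G κ)
    {x y : P} (hcol : κ x = κ y) (hxy : x < y) {S : Finset P}
    (hS : ∀ z, x < z → z < y → z ∈ S) (hSc : ∀ z ∈ S, κ z ≠ κ x) : 2 ≤ S.card := by
  rw [← hICE2 x y hcol hxy fun z hz hxzy => hSc z (hS z hxzy.1 hxzy.2) hz]
  refine card_le_card fun z hz => ?_
  rw [mem_filter] at hz
  exact hS z hz.2.1 hz.2.2.1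

variable [DecidableEq P]

theorem mem_addSet {κ : P → Γ} {a : Γ} {I K : Finset P} :
    K ∈ addSet κ a I ↔
      ∃ x, (κ x = a ∧ x ∉ I ∧ IsLowerSet (↑(insert x I) : Set P)) ∧ insert x I = K := by
  simp [addSet]

theorem addSet_eq_empty_of_card_sdiff_le_one {G : SimpleGraph Γ} {κ : P → Γ} (hEC : EC κ)
    (hICE2 : ICE2 G κ) {c : Γ} {I J : Finset P} {x₁ : P} (hI : IsLowerSet (I : Set P))
    (hx₁ : κ x₁ = c) (hx₁I : x₁ ∉ I) (hI₁ : IsLowerSet (↑(insert x₁ I) : Set P))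
    (hIJ : insert x₁ I ⊆ J) (hcard : (J \ insert x₁ I).card ≤ 1)
    (hcol : ∀ w ∈ J \ insert x₁ I, κ w ≠ c) :
    addSet κ c J = ∅ := by
  refine eq_empty_iff_forall_notMem.2 fun K hK => ?_
  obtain ⟨x₂, ⟨hx₂, hx₂J, hJ₂⟩, -⟩ := mem_addSet.1 hK
  have hx₁J : x₁ ∈ J := hIJ (mem_insert_self _ _)
  have hlt : x₁ < x₂ := by
    refine ((hEC x₁ x₂ (hx₁.trans hx₂.symm)).resolve_right fun h => ?_).lt_of_ne ?_
    · exact hx₂J (hIJ (hI₁ h (mem_insert_self _ _)))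
    · rintro rfl
      exact hx₂J hx₁J
  have hbetween : ∀ z, x₁ < z → z < x₂ → z ∈ J \ insert x₁ I := by
    intro z h₁ h₂
    have hz : z ∈ insert x₂ J := hJ₂ h₂.le (mem_insert_self _ _)
    rw [mem_sdiff, mem_insert, not_or]
    exact ⟨(mem_insert.1 hz).resolve_left h₂.ne, h₁.ne', fun hzI => hx₁I (hI h₁.le hzI)⟩
  have := two_le_card_of_forall_between_mem hICE2 (hx₁.trans hx₂.symm) hlt hbetween
    (by rwa [hx₁])
  omega

end Combinatorics

section Raising

variable {P Γ : Type} [PartialOrder P] {m : ℕ}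

variable (P m) in
def lowerSpan : Submodule ℚ ((Fin m → Finset P) →₀ ℚ) :=
  Finsupp.supported ℚ ℚ {T | ∀ j, IsLowerSet (↑(T j) : Set P)}

theorem eq_zero_of_mem_lowerSpan {f : Module.End ℚ ((Fin m → Finset P) →₀ ℚ)}
    (hf : ∀ T : Fin m → Finset P, (∀ j, IsLowerSet (↑(T j) : Set P)) → f (Finsupp.single T 1) = 0)
    {v : (Fin m → Finset P) →₀ ℚ} (hv : v ∈ lowerSpan P m) : f v = 0 := by
  rw [lowerSpan, Finsupp.supported_eq_span_single] at hv
  exact LinearMap.eqOn_span' (g := 0) (by rintro _ ⟨T, hT, rfl⟩; exact hf T hT) hv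

variable [Fintype P] [DecidableEq P]

noncomputable def raiseAt (κ : P → Γ) (a : Γ) (j : Fin m) :
    Module.End ℚ ((Fin m → Finset P) →₀ ℚ) :=
  Finsupp.linearCombination ℚ fun T =>
    ∑ J ∈ addSet κ a (T j), Finsupp.single (Function.update T j J) 1

variable (κ : P → Γ)

theorem raiseAt_single (a : Γ) (j : Fin m) (T : Fin m → Finset P) :
    raiseAt κ a j (Finsupp.single T 1) =
      ∑ J ∈ addSet κ a (T j), Finsupp.single (Function.update T j J) 1 := by
  rw [raiseAt, Finsupp.linearCombination_single, one_smul]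

theorem raiseAt_single_update (a : Γ) (j : Fin m) (T : Fin m → Finset P) (J : Finset P) :
    raiseAt κ a j (Finsupp.single (Function.update T j J) 1) =
      ∑ K ∈ addSet κ a J, Finsupp.single (Function.update T j K) 1 := by
  simp only [raiseAt_single, Function.update_self, Function.update_idem]

theorem XvT_eq_sum_raiseAt (a : Γ) (v : (Fin m → Finset P) →₀ ℚ) :
    XvT κ a v = ∑ j, raiseAt κ a j v := by
  simp only [XvT, raiseAt, Finsupp.linearCombination_apply, Finsupp.sum]
  rw [sum_comm]
  refine sum_congr rfl fun T _ => ?_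
  rw [← smul_sum]
  rfl

theorem raiseAt_commute (a a' : Γ) {i j : Fin m} (hij : i ≠ j) :
    Commute (raiseAt κ a i) (raiseAt κ a' j) := by
  refine Finsupp.lhom_ext' fun T => LinearMap.ext_ring ?_
  simp only [LinearMap.comp_apply, Finsupp.lsingle_apply, Module.End.mul_apply, raiseAt_single,
    map_sum, Function.update_of_ne hij, Function.update_of_ne hij.symm]
  rw [sum_comm]
  simp only [Function.update_comm hij]

theorem raiseAt_mem_lowerSpan (a : Γ) (j : Fin m) {v : (Fin m → Finset P) →₀ ℚ}
    (hv : v ∈ lowerSpan P m) : raiseAt κ a j v ∈ lowerSpan P m := by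
  rw [raiseAt, Finsupp.linearCombination_apply]
  refine Submodule.finsuppSum_mem _ _ _ _ fun T hT => Submodule.smul_mem _ _ ?_
  refine Submodule.sum_mem _ fun J hJ => Finsupp.single_mem_supported ℚ 1 fun i => ?_
  obtain ⟨x, ⟨-, -, hx⟩, rfl⟩ := mem_addSet.1 hJ
  obtain rfl | hij := eq_or_ne i j
  · rwa [Function.update_self]
  · rw [Function.update_of_ne hij]
    exact (Finsupp.mem_supported ℚ v).1 hv (Finsupp.mem_support_iff.2 hT) i

end Raising

section Restricted

variable {P Γ : Type} [Fintype P] [PartialOrder P] [DecidableEq P] {m : ℕ} (κ : P → Γ)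

/-- `Y_{c,j} Y_{c,j} = 0` holds only on tuples of order ideals, so the operator algebra is
computed on their span. -/
noncomputable def raiseOn (a : Γ) (j : Fin m) : Module.End ℚ (lowerSpan P m) :=
  (raiseAt κ a j).restrict fun _ => raiseAt_mem_lowerSpan κ a j

theorem raiseOn_commute (a a' : Γ) {i j : Fin m} (hij : i ≠ j) :
    Commute (raiseOn κ a i) (raiseOn κ a' j) :=
  LinearMap.ext fun w => Subtype.ext (LinearMap.congr_fun (raiseAt_commute κ a a' hij) w)

theorem raiseOn_mul_self {G : SimpleGraph Γ} (hEC : EC κ) (hICE2 : ICE2 G κ)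
    (c : Γ) (j : Fin m) : raiseOn κ c j * raiseOn κ c j = 0 := by
  refine LinearMap.ext fun w => Subtype.ext ?_
  change (raiseAt κ c j * raiseAt κ c j) w = 0
  refine eq_zero_of_mem_lowerSpan (fun T hT => ?_) w.2
  rw [Module.End.mul_apply, raiseAt_single, map_sum]
  refine sum_eq_zero fun J hJ => ?_
  obtain ⟨x, ⟨hx, hxT, hxJ⟩, rfl⟩ := mem_addSet.1 hJ
  rw [raiseAt_single_update, addSet_eq_empty_of_card_sdiff_le_one hEC hICE2 (hT j) hx hxT hxJ
    subset_rfl (by simp) (by simp), sum_empty]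

theorem raiseOn_mul_mul_eq_zero {G : SimpleGraph Γ} (hEC : EC κ) (hICE2 : ICE2 G κ)
    {b c : Γ} (hbc : b ≠ c) (j : Fin m) :
    raiseOn κ c j * raiseOn κ b j * raiseOn κ c j = 0 := by
  refine LinearMap.ext fun w => Subtype.ext ?_
  change (raiseAt κ c j * raiseAt κ b j * raiseAt κ c j) w = 0
  refine eq_zero_of_mem_lowerSpan (fun T hT => ?_) w.2
  rw [Module.End.mul_apply, Module.End.mul_apply, raiseAt_single, map_sum, map_sum]
  refine sum_eq_zero fun J hJ => ?_
  obtain ⟨x, ⟨hx, hxT, hxJ⟩, rfl⟩ := mem_addSet.1 hJ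
  rw [raiseAt_single_update, map_sum]
  refine sum_eq_zero fun K hK => ?_
  obtain ⟨u, ⟨hu, huJ, -⟩, rfl⟩ := mem_addSet.1 hK
  have hdiff : insert u (insert x (T j)) \ insert x (T j) = {u} := by
    rw [insert_sdiff_of_notMem _ huJ, sdiff_self, bot_eq_empty, insert_empty]
  rw [raiseAt_single_update, addSet_eq_empty_of_card_sdiff_le_one hEC hICE2 (hT j) hx hxT hxJ
    (subset_insert _ _) (by rw [hdiff, card_singleton])
    (by rw [hdiff]; rintro w hw; rwa [mem_singleton.1 hw, hu]), sum_empty]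

theorem opPowT_coe (a : Γ) (k : ℕ) (w : lowerSpan P m) :
    opPowT κ a k (w : (Fin m → Finset P) →₀ ℚ) =
      (((k.factorial : ℚ)⁻¹ • (∑ j, raiseOn κ a j) ^ k) w : lowerSpan P m) := by
  have hX : Function.Semiconj Subtype.val ⇑(∑ j, raiseOn κ a j) (XvT κ (m := m) a) := fun v => by
    rw [XvT_eq_sum_raiseAt, LinearMap.sum_apply, Submodule.coe_sum]
    rfl
  rw [opPowT, ← hX.iterate_right k w, LinearMap.smul_apply, Module.End.pow_apply,
    Submodule.coe_smul]

end Restricted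

theorem stmt16_general (P Γ : Type) [Fintype P] [PartialOrder P] [DecidableEq P]
    (G : SimpleGraph Γ) (κ : P → Γ)
    (hEC : ∀ x y : P, κ x = κ y → x ≤ y ∨ y ≤ x)
    (hICE2 : ∀ x y : P, κ x = κ y → x < y →
      (∀ z : P, κ z = κ x → ¬ (x < z ∧ z < y)) →
      (Finset.univ.filter (fun z : P => x < z ∧ z < y ∧ G.Adj (κ z) (κ x))).card = 2)
    (b c : Γ) (hbc : b ≠ c) (m : ℕ) (p q : ℕ) (hpq : p < q) :
    ∀ T : Fin m → Finset P, (∀ j, IsLowerSet (↑(T j) : Set P)) →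
      ∑ k ∈ Finset.range (q + 1), ((-1 : ℚ)) ^ k •
        opPowT κ c (q - k) (opPowT κ b p (opPowT κ c k (Finsupp.single T 1))) = 0 := by
  intro T hT
  have hAB := commute_sum_sum_sub_sum_mul_sum (R := Module.End ℚ (lowerSpan P m)) univ
    (fun _ _ h => raiseOn_commute κ c c h) (fun _ _ h => raiseOn_commute κ c b h)
    (raiseOn_mul_self κ hEC hICE2 c) (raiseOn_mul_mul_eq_zero κ hEC hICE2 hbc)
  let w : lowerSpan P m := ⟨Finsupp.single T 1, Finsupp.single_mem_supported ℚ 1 hT⟩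
  have hw := congr_arg Subtype.val
    (LinearMap.congr_fun (sum_neg_one_pow_smul_divided_powers_eq_zero hAB hpq) w)
  rw [show Finsupp.single T 1 = (w : (Fin m → Finset P) →₀ ℚ) from rfl]
  simp only [opPowT_coe]
  simpa only [LinearMap.sum_apply, LinearMap.smul_apply, Module.End.mul_apply,
    Submodule.coe_sum, Submodule.coe_smul, LinearMap.zero_apply, ZeroMemClass.coe_zero] using hw

/-- Lemma 5.3: for a finite `Γ`-colored poset satisfying EC, NA, AC, and ICE2 (with
respect to a simple graph structure on the colors), distinct colors `b, c`, `m ≥ 1`,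
and `q > p ≥ 0`, the alternating identity
`∑_{k=0}^{q} (-1)^k ⟨c^{q-k}⟩∘⟨b^p⟩∘⟨c^k⟩ = 0` holds on `m`-tuples of order ideals. -/
theorem stmt16 (P Γ : Type) [Fintype P] [PartialOrder P] [DecidableEq P] [Nonempty P]
    (G : SimpleGraph Γ) (κ : P → Γ) (hsurj : Function.Surjective κ)
    (hEC : ∀ x y : P, κ x = κ y → x ≤ y ∨ y ≤ x)
    (hNA : ∀ x y : P, x ⋖ y → G.Adj (κ x) (κ y))
    (hAC : ∀ x y : P, G.Adj (κ x) (κ y) → x ≤ y ∨ y ≤ x)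
    (hICE2 : ∀ x y : P, κ x = κ y → x < y →
      (∀ z : P, κ z = κ x → ¬ (x < z ∧ z < y)) →
      (Finset.univ.filter (fun z : P => x < z ∧ z < y ∧ G.Adj (κ z) (κ x))).card = 2)
    (b c : Γ) (hbc : b ≠ c) (m : ℕ) (hm : 1 ≤ m) (p q : ℕ) (hpq : p < q) :
    ∀ T : Fin m → Finset P, (∀ j, IsLowerSet (↑(T j) : Set P)) →
      ∑ k ∈ Finset.range (q + 1), ((-1 : ℚ)) ^ k •
        opPowT κ c (q - k) (opPowT κ b p (opPowT κ c k (Finsupp.single T 1))) = 0 :=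
  stmt16_general P Γ G κ hEC hICE2 b c hbc m p q hpq
end

section
/- Let P be a finite Γ-colored d-complete poset (satisfying EC, NA, AC, ICE2, UCB1), let I be an order ideal of P with maximal element x, and suppose some color c ≠ κ(x) is adjacent to κ(x) in Γ, colors c and κ(x) appear on neighbors in I, and the filter P \ I has no minimal element of color c. Then there exists an element u of color c with u covered by x in P (u → x). -/
open scoped Classical

/-!
Let `w` be a maximal element of color `c` in `I`. Since `c` and `κ x` are adjacent, `w` and `x`
are comparable, so `w < x`, and it suffices to show that the only element `y` with `w < y ≤ x`
whose color is adjacent to `c` is `x` itself (some cover of `w` below `x` is such an element).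
If `w` is the top element of color `c`, this is UCB1. Otherwise let `w'` be the next element of
color `c`; it lies outside `I`, and ICE2 leaves exactly two elements of adjacent color strictly
between `w` and `w'`. As `w'` is not minimal in `P \ I`, one of them lies in `P \ I` (an element
covered by `w'` outside `I`), so the elements of `I` among them are reduced to `x`.
-/

open Finset

section ColoredPoset

variable {P Γ : Type*} [PartialOrder P] {G : SimpleGraph Γ} {κ : P → Γ}

lemma lt_of_adj_of_mem_of_notMem (hAC : ∀ x y : P, G.Adj (κ x) (κ y) → x ≤ y ∨ y ≤ x)
    {I : Set P} (hI : IsLowerSet I) {y z : P} (hy : y ∈ I) (hz : z ∉ I)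
    (hyz : G.Adj (κ y) (κ z)) : y < z :=
  (hAC y z hyz).elim (fun h => h.lt_of_ne (by rintro rfl; exact hz hy))
    (fun h => absurd (hI h hy) hz)

lemma covBy_of_forall_adj_eq [IsStronglyAtomic P] (hNA : ∀ x y : P, x ⋖ y → G.Adj (κ x) (κ y))
    {w x : P} (hwx : w < x)
    (huniq : ∀ y, w < y → y ≤ x → G.Adj (κ y) (κ w) → y = x) : w ⋖ x := by
  obtain ⟨s, hws, hsx⟩ := exists_covBy_le_of_lt hwx
  rwa [← huniq s hws.lt hsx (hNA w s hws).symm]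

lemma exists_adj_between_notMem [IsStronglyCoatomic P]
    (hAC : ∀ x y : P, G.Adj (κ x) (κ y) → x ≤ y ∨ y ≤ x)
    (hNA : ∀ x y : P, x ⋖ y → G.Adj (κ x) (κ y)) {I : Set P} (hI : IsLowerSet I)
    {w w' z : P} (hw : w ∈ I) (hw' : κ w' = κ w) (hz : z ∉ I) (hzw' : z < w') :
    ∃ t ∉ I, w < t ∧ t < w' ∧ G.Adj (κ t) (κ w) := by
  obtain ⟨t, hzt, htw'⟩ := exists_le_covBy_of_lt hzw'
  have htI : t ∉ I := fun ht => hz (hI hzt ht)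
  have htadj : G.Adj (κ t) (κ w) := hw' ▸ hNA t w' htw'
  exact ⟨t, htI, lt_of_adj_of_mem_of_notMem hAC hI hw htI htadj.symm, htw'.lt, htadj⟩

lemma eq_of_card_adj_between_eq_two [Fintype P]
    (hAC : ∀ x y : P, G.Adj (κ x) (κ y) → x ≤ y ∨ y ≤ x) {I : Set P} (hI : IsLowerSet I)
    {w w' t x y : P} (hw'I : w' ∉ I) (hw' : κ w' = κ w)
    (hcard : (univ.filter fun z : P => w < z ∧ z < w' ∧ G.Adj (κ z) (κ w)).card = 2)
    (ht : t ∉ I ∧ w < t ∧ t < w' ∧ G.Adj (κ t) (κ w))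
    (hx : x ∈ I) (hwx : w < x) (hxadj : G.Adj (κ x) (κ w))
    (hy : y ∈ I) (hwy : w < y) (hyadj : G.Adj (κ y) (κ w)) : y = x := by
  set S := univ.filter fun z : P => w < z ∧ z < w' ∧ G.Adj (κ z) (κ w)
  have hmem : ∀ a ∈ I, w < a → G.Adj (κ a) (κ w) → a ∈ S.erase t := fun a ha hwa hadj =>
    mem_erase.mpr ⟨by rintro rfl; exact ht.1 ha, by
      simp [S, hwa, hadj, lt_of_adj_of_mem_of_notMem hAC hI ha hw'I (hw' ▸ hadj)]⟩
  have hle : (S.erase t).card ≤ 1 := by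
    rw [card_erase_of_mem (by simp [S, ht.2]), hcard]
  exact card_le_one.mp hle y (hmem y hy hwy hyadj) x (hmem x hx hwx hxadj)

end ColoredPoset

theorem stmt18_general (P Γ : Type) [Fintype P] [PartialOrder P]
    (G : SimpleGraph Γ) (κ : P → Γ)
    (hNA : ∀ x y : P, x ⋖ y → G.Adj (κ x) (κ y))
    (hAC : ∀ x y : P, G.Adj (κ x) (κ y) → x ≤ y ∨ y ≤ x)
    (hICE2 : ∀ x y : P, κ x = κ y → x < y →
      (∀ z : P, κ z = κ x → ¬ (x < z ∧ z < y)) →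
      (Finset.univ.filter (fun z : P => x < z ∧ z < y ∧ G.Adj (κ z) (κ x))).card = 2)
    (hUCB1 : ∀ x : P, (∀ y : P, κ y = κ x → ¬ x < y) →
      (Finset.univ.filter (fun y : P => x < y ∧ G.Adj (κ y) (κ x))).card ≤ 1)
    (I : Finset P) (hI : IsLowerSet (↑I : Set P))
    (x : P) (hxI : x ∈ I) (hxmax : ∀ y ∈ I, ¬ x < y)
    (c : Γ) (hcx : c ≠ κ x) (hadj : G.Adj c (κ x))
    (hnbr : ∃ u v : P, u ∈ I ∧ v ∈ I ∧ u ⋖ v ∧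
      ((κ u = c ∧ κ v = κ x) ∨ (κ u = κ x ∧ κ v = c)))
    (hmin : ¬ ∃ y : P, y ∉ I ∧ κ y = c ∧ ∀ z : P, z ∉ I → z ≤ y → z = y) :
    ∃ u : P, κ u = c ∧ u ⋖ x := by
  have hcI : ∃ y, y ∈ I ∧ κ y = c := by
    obtain ⟨u, v, huI, hvI, -, ⟨hu, -⟩ | ⟨-, hv⟩⟩ := hnbr
    exacts [⟨u, huI, hu⟩, ⟨v, hvI, hv⟩]
  obtain ⟨w, hwmax⟩ := exists_maximal_of_wellFoundedGT _ hcI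
  obtain ⟨hwI, hwc⟩ := hwmax.prop
  have hxadj : G.Adj (κ x) (κ w) := hwc ▸ hadj.symm
  have hwx : w < x := by
    have hne : w ≠ x := by rintro rfl; exact hcx hwc.symm
    rcases hAC x w hxadj with h | h
    · exact absurd (h.lt_of_ne hne.symm) (hxmax w hwI)
    · exact h.lt_of_ne hne
  refine ⟨w, hwc, covBy_of_forall_adj_eq hNA hwx fun y hwy hyx hyadj => ?_⟩
  by_cases htop : ∀ y, κ y = κ w → ¬ w < y
  · exact card_le_one.mp (hUCB1 w htop) y (by simp [hwy, hyadj]) x (by simp [hwx, hxadj])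
  push Not at htop
  obtain ⟨w', hw'min⟩ := exists_minimal_of_wellFoundedLT _ htop
  obtain ⟨hw'c, hww'⟩ := hw'min.prop
  have hw'I : w' ∉ I := fun h => hwmax.not_gt ⟨h, hw'c.trans hwc⟩ hww'
  have hcons : ∀ z, κ z = κ w → ¬ (w < z ∧ z < w') := fun z hz h => hw'min.not_lt ⟨hz, h.1⟩ h.2
  push Not at hmin
  obtain ⟨z, hzI, hzw', hzne⟩ := hmin w' hw'I (hw'c.trans hwc)
  obtain ⟨t, ht⟩ := exists_adj_between_notMem hAC hNA hI hwI hw'c hzI (hzw'.lt_of_ne hzne)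
  exact eq_of_card_adj_between_eq_two hAC hI hw'I hw'c (hICE2 w w' hw'c.symm hww' hcons) ht
    hxI hwx hxadj (hI hyx hxI) hwy hyadj

/-- Structural claim from the proof of Theorem 6.1: in a finite `Γ`-colored
`d`-complete poset (satisfying EC, NA, AC, ICE2, UCB1), if `I` is an order ideal with
maximal element `x`, `c` is a color distinct from and adjacent to `κ x`, the colors
`c` and `κ x` occur on a pair of neighbors in `I`, and the filter `P \ I` has no
minimal element of color `c`, then some element of color `c` is covered by `x`. -/
theorem stmt18 (P Γ : Type) [Fintype P] [PartialOrder P] [DecidableEq P] [Nonempty P]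
    (G : SimpleGraph Γ) (κ : P → Γ) (hsurj : Function.Surjective κ)
    (hEC : ∀ x y : P, κ x = κ y → x ≤ y ∨ y ≤ x)
    (hNA : ∀ x y : P, x ⋖ y → G.Adj (κ x) (κ y))
    (hAC : ∀ x y : P, G.Adj (κ x) (κ y) → x ≤ y ∨ y ≤ x)
    (hICE2 : ∀ x y : P, κ x = κ y → x < y →
      (∀ z : P, κ z = κ x → ¬ (x < z ∧ z < y)) →
      (Finset.univ.filter (fun z : P => x < z ∧ z < y ∧ G.Adj (κ z) (κ x))).card = 2)
    (hUCB1 : ∀ x : P, (∀ y : P, κ y = κ x → ¬ x < y) →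
      (Finset.univ.filter (fun y : P => x < y ∧ G.Adj (κ y) (κ x))).card ≤ 1)
    (I : Finset P) (hI : IsLowerSet (↑I : Set P))
    (x : P) (hxI : x ∈ I) (hxmax : ∀ y ∈ I, ¬ x < y)
    (c : Γ) (hcx : c ≠ κ x) (hadj : G.Adj c (κ x))
    (hnbr : ∃ u v : P, u ∈ I ∧ v ∈ I ∧ u ⋖ v ∧
      ((κ u = c ∧ κ v = κ x) ∨ (κ u = κ x ∧ κ v = c)))
    (hmin : ¬ ∃ y : P, y ∉ I ∧ κ y = c ∧ ∀ z : P, z ∉ I → z ≤ y → z = y) :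
    ∃ u : P, κ u = c ∧ u ⋖ x :=
  stmt18_general P Γ G κ hNA hAC hICE2 hUCB1 I hI x hxI hxmax c hcx hadj hnbr hmin
end
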